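/- arXiv:1001.0260 — 7 statements merged into one kernel-verified Lean document; each statement's English description precedes it below -/
import Mathlib

section
/- Let X be a normed space with modulus of convexity δ, let m ≥ 1 be an integer, and let g : X → [0,∞) satisfy g(t·v) = t^m·g(v) for all t ≥ 0 and v ∈ X (positive homogeneity of degree m). Let x, y ∈ X with ‖x‖ = ‖y‖ = 1, x ≠ y and x ≠ −y, and suppose the function v ↦ g(v)^{1/m} is concave on the segment [x, y]. Set z = (x+y)/‖x+y‖. Then (g(x)^{1/m} + g(y)^{1/m})/2 ≤ (1 − δ(‖x − y‖))·g(z)^{1/m}. -/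
open Set

/-- If `X` is a normed space with modulus of convexity `δ`, `g : X → [0,∞)` is positively
homogeneous of degree `m`, `x, y` are unit vectors with `x ≠ y`, `x ≠ -y`, and
`g^{1/m}` is concave on the segment `[x,y]`, then with `z = (x+y)/‖x+y‖` one has
`(g(x)^{1/m} + g(y)^{1/m})/2 ≤ (1 − δ(‖x − y‖))·g(z)^{1/m}`. -/
theorem weak_concavity_from_homogeneity_and_concavity
    {X : Type*} [NormedAddCommGroup X] [NormedSpace ℝ X]
    (δ : ℝ → ℝ)
    (hδmono : MonotoneOn δ (Ici 0))
    (hδnonneg : ∀ t ∈ Ici (0 : ℝ), 0 ≤ δ t)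
    (hδmod : ∀ ε : ℝ, 0 < ε → ∀ x y : X, ‖x‖ = 1 → ‖y‖ = 1 → ε ≤ ‖x - y‖ →
      ‖(2 : ℝ)⁻¹ • (x + y)‖ ≤ 1 - δ ε)
    (m : ℕ) (hm : 1 ≤ m)
    (g : X → ℝ)
    (hg_nonneg : ∀ v, 0 ≤ g v)
    (hg_hom : ∀ t : ℝ, 0 ≤ t → ∀ v, g (t • v) = t ^ m * g v)
    (x y : X) (hx : ‖x‖ = 1) (hy : ‖y‖ = 1) (hxy : x ≠ y) (hxy' : x ≠ -y)
    (hconc : ConcaveOn ℝ (segment ℝ x y) (fun v => g v ^ ((1 : ℝ) / m))) :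
    (g x ^ ((1 : ℝ) / m) + g y ^ ((1 : ℝ) / m)) / 2 ≤
      (1 - δ ‖x - y‖) * g (‖x + y‖⁻¹ • (x + y)) ^ ((1 : ℝ) / m) := by
  have hm0 : (m : ℝ) ≠ 0 := by positivity
  set z : X := ‖x + y‖⁻¹ • (x + y) with hz
  set w : X := (2 : ℝ)⁻¹ • (x + y) with hw
  have hxyne : x + y ≠ 0 := by
    intro h
    exact hxy' (by rw [eq_neg_iff_add_eq_zero]; exact h)
  have hnorm_pos : (0 : ℝ) < ‖x + y‖ := norm_pos_iff.mpr hxyne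
  have hwnorm : ‖w‖ = 2⁻¹ * ‖x + y‖ := by
    rw [hw, norm_smul]; norm_num
  have hwz : w = ‖w‖ • z := by
    rw [hz, hwnorm, hw, smul_smul, mul_assoc, mul_inv_cancel₀ hnorm_pos.ne', mul_one]
  have hwnonneg : (0 : ℝ) ≤ ‖w‖ := norm_nonneg _
  -- g w = ‖w‖^m * g z
  have hgw : g w = ‖w‖ ^ m * g z := by
    conv_lhs => rw [hwz]
    rw [hg_hom _ hwnonneg z]
  have hzpow : g w ^ ((1 : ℝ) / m) = ‖w‖ * g z ^ ((1 : ℝ) / m) := by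
    rw [hgw, Real.mul_rpow (by positivity) (hg_nonneg z)]
    congr 1
    rw [← Real.rpow_natCast ‖w‖ m, ← Real.rpow_mul hwnonneg]
    rw [mul_one_div, div_self hm0, Real.rpow_one]
  -- concavity gives midpoint inequality
  have hxmem : x ∈ segment ℝ x y := left_mem_segment ℝ x y
  have hymem : y ∈ segment ℝ x y := right_mem_segment ℝ x y
  have hmid := hconc.2 hxmem hymem (by norm_num : (0:ℝ) ≤ 2⁻¹)
    (by norm_num : (0:ℝ) ≤ 2⁻¹) (by norm_num : (2:ℝ)⁻¹ + 2⁻¹ = 1)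
  have hmid' : (g x ^ ((1 : ℝ) / m) + g y ^ ((1 : ℝ) / m)) / 2 ≤ g w ^ ((1 : ℝ) / m) := by
    have : (2 : ℝ)⁻¹ • x + (2 : ℝ)⁻¹ • y = w := by
      rw [hw, smul_add]
    rw [this] at hmid
    calc (g x ^ ((1 : ℝ) / m) + g y ^ ((1 : ℝ) / m)) / 2
        = 2⁻¹ * g x ^ ((1 : ℝ) / m) + 2⁻¹ * g y ^ ((1 : ℝ) / m) := by ring
      _ ≤ _ := hmid
  -- modulus bound
  have hεpos : 0 < ‖x - y‖ := by
    rw [norm_pos_iff, sub_ne_zero]; exact hxy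
  have hwle : ‖w‖ ≤ 1 - δ ‖x - y‖ := hδmod _ hεpos x y hx hy le_rfl
  calc (g x ^ ((1 : ℝ) / m) + g y ^ ((1 : ℝ) / m)) / 2
      ≤ g w ^ ((1 : ℝ) / m) := hmid'
    _ = ‖w‖ * g z ^ ((1 : ℝ) / m) := hzpow
    _ ≤ (1 - δ ‖x - y‖) * g z ^ ((1 : ℝ) / m) :=
        mul_le_mul_of_nonneg_right hwle (Real.rpow_nonneg (hg_nonneg z) _)
end

section
/- Let C ⊂ ℝ^d be a compact convex set with nonempty interior, m ≥ 1 an integer, and φ : C → [0,∞) a function such that φ^{1/m} is concave on C and ∫_C φ(u) du = 1 (integration with respect to d-dimensional Lebesgue measure). Then for every x ∈ C, φ(x) ≤ 2^{m+d} / vol_d(C), where vol_d denotes d-dimensional Lebesgue measure. -/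
/-!
The homothety of ratio `1/2` centred at `x` maps `C` onto a subset `D ⊆ C` of volume
`2⁻ᵈ vol C`, and concavity of `φ^{1/m}` along the segments from `x` gives `φ ≥ 2⁻ᵐ φ x` on `D`.
Hence `1 = ∫_C φ ≥ ∫_D φ ≥ 2^{-(m+d)} φ x vol C`.
-/

open MeasureTheory

open AffineMap in
theorem mul_le_apply_homothety_of_concaveOn_rpow {E : Type*} [AddCommGroup E] [Module ℝ E]
    {C : Set E} {φ : E → ℝ} {m : ℕ} (hm : m ≠ 0) (hφ_nonneg : ∀ u ∈ C, 0 ≤ φ u)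
    (hφ : ConcaveOn ℝ C fun u => φ u ^ ((1 : ℝ) / m)) {x u : E} (hx : x ∈ C) (hu : u ∈ C)
    {t : ℝ} (ht₀ : 0 ≤ t) (ht₁ : t ≤ 1) :
    (1 - t) ^ m * φ x ≤ φ (homothety x t u) := by
  rw [homothety_eq_lineMap, lineMap_apply_module]
  have ht : 0 ≤ 1 - t := sub_nonneg.2 ht₁
  have hv : (1 - t) • x + t • u ∈ C := hφ.1 hx hu ht ht₀ (sub_add_cancel 1 t)
  have hroot : ∀ v ∈ C, (φ v ^ ((1 : ℝ) / m)) ^ m = φ v := fun v hvC => by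
    rw [one_div, Real.rpow_inv_natCast_pow (hφ_nonneg v hvC) hm]
  have hle : (1 - t) * φ x ^ ((1 : ℝ) / m) ≤ φ ((1 - t) • x + t • u) ^ ((1 : ℝ) / m) := by
    have hconc := hφ.2 hx hu ht ht₀ (sub_add_cancel 1 t)
    have := Real.rpow_nonneg (hφ_nonneg u hu) ((1 : ℝ) / m)
    simp only [smul_eq_mul] at hconc
    nlinarith
  calc (1 - t) ^ m * φ x = ((1 - t) * φ x ^ ((1 : ℝ) / m)) ^ m := by rw [mul_pow, hroot x hx]
    _ ≤ (φ ((1 - t) • x + t • u) ^ ((1 : ℝ) / m)) ^ m :=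
      pow_le_pow_left₀ (mul_nonneg ht (Real.rpow_nonneg (hφ_nonneg x hx) _)) hle m
    _ = φ ((1 - t) • x + t • u) := hroot _ hv

open AffineMap Module in
theorem ofReal_mul_measure_le_setLIntegral_of_concaveOn_rpow {E : Type*}
    [NormedAddCommGroup E] [NormedSpace ℝ E] [MeasurableSpace E] [BorelSpace E]
    [FiniteDimensional ℝ E] (μ : Measure E) [μ.IsAddHaarMeasure]
    {C : Set E} {φ : E → ℝ} {m : ℕ} (hm : m ≠ 0) (hφ_nonneg : ∀ u ∈ C, 0 ≤ φ u)
    (hφ : ConcaveOn ℝ C fun u => φ u ^ ((1 : ℝ) / m)) {x : E} (hx : x ∈ C)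
    {t : ℝ} (ht₀ : 0 ≤ t) (ht₁ : t ≤ 1) :
    ENNReal.ofReal ((1 - t) ^ m * t ^ finrank ℝ E * φ x) * μ C ≤
      ∫⁻ u in C, ENNReal.ofReal (φ u) ∂μ := by
  set D := homothety x t '' C
  have hDC : D ⊆ C := by
    rintro _ ⟨u, hu, rfl⟩
    rw [homothety_eq_lineMap]
    exact hφ.1.lineMap_mem hx hu ⟨ht₀, ht₁⟩
  have hD : NullMeasurableSet D μ := (hφ.1.affine_image _).nullMeasurableSet μ
  have hφ_D : ∀ v ∈ D, (1 - t) ^ m * φ x ≤ φ v := by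
    rintro _ ⟨u, hu, rfl⟩
    exact mul_le_apply_homothety_of_concaveOn_rpow hm hφ_nonneg hφ hx hu ht₀ ht₁
  calc ENNReal.ofReal ((1 - t) ^ m * t ^ finrank ℝ E * φ x) * μ C
      = ENNReal.ofReal ((1 - t) ^ m * φ x) * μ D := by
        rw [Measure.addHaar_image_homothety, abs_of_nonneg (pow_nonneg ht₀ _), ← mul_assoc,
          ← ENNReal.ofReal_mul (by have := hφ_nonneg x hx; positivity), mul_right_comm]
    _ = ∫⁻ _ in D, ENNReal.ofReal ((1 - t) ^ m * φ x) ∂μ := (setLIntegral_const _ _).symm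
    _ ≤ ∫⁻ v in D, ENNReal.ofReal (φ v) ∂μ :=
        lintegral_mono_ae <| (ae_restrict_mem₀ hD).mono fun v hv =>
          ENNReal.ofReal_le_ofReal (hφ_D v hv)
    _ ≤ ∫⁻ u in C, ENNReal.ofReal (φ u) ∂μ := lintegral_mono_set hDC

/-- `v = ⊤` is allowed: the hypothesis then forces `a ≤ 0 = b / v.toReal`. -/
theorem le_div_toReal_of_ofReal_div_mul_le_one {a b : ℝ} {v : ENNReal} (hb : 0 < b)
    (hv : v ≠ 0) (h : ENNReal.ofReal (a / b) * v ≤ 1) : a ≤ b / v.toReal := by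
  rcases le_or_gt a 0 with ha | ha
  · exact ha.trans (by positivity)
  have hab : 0 < a / b := div_pos ha hb
  have hv_top : v ≠ ⊤ := by
    rintro rfl
    simp [ENNReal.mul_top (ENNReal.ofReal_pos.2 hab).ne'] at h
  have := ENNReal.toReal_mono ENNReal.one_ne_top h
  rw [ENNReal.toReal_mul, ENNReal.toReal_ofReal hab.le, ENNReal.toReal_one] at this
  rw [le_div_iff₀ (ENNReal.toReal_pos hv hv_top)]
  rwa [div_mul_eq_mul_div, div_le_one hb] at this

open Module in
theorem density_bound_of_m_concave_general
    (d m : ℕ) (hm : 1 ≤ m)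
    (C : Set (EuclideanSpace ℝ (Fin d)))
    (φ : EuclideanSpace ℝ (Fin d) → ℝ)
    (hφ_nonneg : ∀ u ∈ C, 0 ≤ φ u)
    (hφ_conc : ConcaveOn ℝ C (fun u => φ u ^ ((1 : ℝ) / m)))
    (hφ_int : ∫ u in C, φ u = 1) :
    ∀ x ∈ C, φ x ≤ 2 ^ (m + d) / (volume C).toReal := by
  intro x hx
  have hvol : volume C ≠ 0 := fun h => by simp [Measure.restrict_eq_zero.mpr h] at hφ_int
  have hlint : ∫⁻ u in C, ENNReal.ofReal (φ u) = 1 := by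
    rw [← ofReal_integral_eq_lintegral_ofReal
      (Integrable.of_integral_ne_zero (by rw [hφ_int]; exact one_ne_zero))
      ((ae_restrict_mem₀ (hφ_conc.1.nullMeasurableSet volume)).mono hφ_nonneg),
      hφ_int, ENNReal.ofReal_one]
  have key := ofReal_mul_measure_le_setLIntegral_of_concaveOn_rpow volume (by omega)
    hφ_nonneg hφ_conc hx (t := 2⁻¹) (by norm_num) (by norm_num)
  have hc : (1 - 2⁻¹ : ℝ) ^ m * 2⁻¹ ^ finrank ℝ (EuclideanSpace ℝ (Fin d)) * φ x =
      φ x / 2 ^ (m + d) := by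
    rw [finrank_euclideanSpace_fin, pow_add, div_eq_mul_inv, mul_inv, ← inv_pow, ← inv_pow]
    norm_num
    ring
  rw [hlint, hc] at key
  exact le_div_toReal_of_ofReal_div_mul_le_one (by positivity) hvol key

/-- Bound on the density: if `C ⊂ ℝ^d` is a compact convex set with nonempty interior
and `φ : C → [0,∞)` is `m`-concave (`φ^{1/m}` concave) with `∫_C φ = 1`, then for every
`x ∈ C`, `φ(x) ≤ 2^{m+d}/vol_d(C)`. -/
theorem density_bound_of_m_concave
    (d m : ℕ) (hm : 1 ≤ m)
    (C : Set (EuclideanSpace ℝ (Fin d)))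
    (hC_compact : IsCompact C) (hC_conv : Convex ℝ C)
    (hC_int : (interior C).Nonempty)
    (φ : EuclideanSpace ℝ (Fin d) → ℝ)
    (hφ_nonneg : ∀ u ∈ C, 0 ≤ φ u)
    (hφ_conc : ConcaveOn ℝ C (fun u => φ u ^ ((1 : ℝ) / m)))
    (hφ_int : ∫ u in C, φ u = 1) :
    ∀ x ∈ C, φ x ≤ 2 ^ (m + d) / (volume C).toReal :=
  density_bound_of_m_concave_general d m hm C φ hφ_nonneg hφ_conc hφ_int
end

section
/- Let S and S_i (i ∈ ℕ) be compact convex subsets of ℝ^n with nonempty interior such that S_i converges to S in Hausdorff distance, and let φ_i : S_i → [0,1] be concave functions. Then there exist a concave function φ : S → [0,1] and a subsequence (i_j) such that: (i) on every compact subset K of the interior of S, φ_{i_j} converges uniformly to φ (the φ_{i_j} being defined on K for j large enough); and (ii) for every x ∈ ∂S and every sequence x_j ∈ S_{i_j} converging to x, limsup_{j→∞} φ_{i_j}(x_j) ≤ φ(x). -/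
/-!
A concave function with values in `[a, b]` on a ball is Lipschitz on the concentric ball of half
the radius, with a constant depending only on `a`, `b` and the radius. Since the `S_i` are convex,
Hausdorff convergence `S_i → S` forces every small enough ball around an interior point of `S` into
all but finitely many `S_i`, so the `φ_i` are eventually equi-Lipschitz near each interior point.
A diagonal argument on a countable dense subset of the interior then yields a subsequence
converging locally uniformly on the interior to a concave limit. On the boundary the limit is
defined as the limit along the segment towards a fixed interior point `z`, which exists because
secant slopes of a concave function are monotone. Concavity and `φ_i ≥ 0` give
`(1 - t) φ_i(x_j) ≤ φ_i((1 - t) x_j + t z)`, so the upper bound at a boundary point follows by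
letting first `j → ∞` and then `t → 0`.
-/

open Set Metric Filter Topology AffineMap TopologicalSpace
open scoped NNReal RealInnerProductSpace

section InnerProductSpace

variable {E : Type*} [NormedAddCommGroup E] [InnerProductSpace ℝ E]

theorem mem_of_ball_subset_thickening {C : Set E} (hC : IsComplete C) (hconv : Convex ℝ C)
    (hne : C.Nonempty) {x : E} {r : ℝ} (hr : 0 < r) (h : ball x r ⊆ thickening r C) : x ∈ C := by
  by_contra hx
  obtain ⟨c, hcC, hc⟩ := exists_norm_eq_iInf_of_complete_convex hne hC hconv x
  have hobtuse : ∀ a ∈ C, ⟪x - c, a - c⟫ ≤ 0 := (norm_eq_iInf_iff_real_inner_le_zero hconv hcC).1 hc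
  set d := ‖x - c‖
  have hd : 0 < d := norm_pos_iff.2 (sub_ne_zero.2 fun h => hx (h ▸ hcC))
  -- Moving from `x` away from its projection `c` by `s` increases the distance to `C` by `s`.
  set s := max (r - d) 0
  set p := x + (s / d) • (x - c)
  have hp : p ∈ ball x r := by
    rw [mem_ball, dist_eq_norm, add_sub_cancel_left, norm_smul,
      Real.norm_of_nonneg (by positivity), div_mul_cancel₀ _ hd.ne']
    exact max_lt (by linarith) hr
  obtain ⟨a, haC, hpa⟩ := mem_thickening_iff.1 (h hp)
  have hinner : (d + s) * d ≤ ⟪p - a, x - c⟫ := by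
    have : p - a = (1 + s / d) • (x - c) - (a - c) := by simp only [p]; module
    rw [this, inner_sub_left, real_inner_smul_left, real_inner_self_eq_norm_sq, real_inner_comm]
    field_simp
    nlinarith [hobtuse a haC]
  have hfar : d + s ≤ dist p a := by
    refine le_of_mul_le_mul_right ?_ hd
    calc (d + s) * d ≤ ⟪p - a, x - c⟫ := hinner
      _ ≤ ‖p - a‖ * ‖x - c‖ := real_inner_le_norm _ _
      _ = dist p a * d := by rw [dist_eq_norm]
  linarith [le_max_left (r - d) 0]

theorem eventually_ball_subset_of_tendsto_hausdorffDist {ι : Type*} {l : Filter ι} {S : Set E}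
    {C : ι → Set E} (hS : Bornology.IsBounded S) (hC : ∀ i, IsCompact (C i))
    (hconv : ∀ i, Convex ℝ (C i)) (hne : ∀ i, (C i).Nonempty)
    (hlim : Tendsto (fun i => hausdorffDist (C i) S) l (𝓝 0)) {x : E} (hx : x ∈ interior S) :
    ∃ r > 0, ∀ᶠ i in l, ball x r ⊆ C i := by
  obtain ⟨ε, hε, hεS⟩ := Metric.isOpen_iff.1 isOpen_interior x hx
  refine ⟨ε / 2, half_pos hε, ?_⟩
  filter_upwards [hlim.eventually (gt_mem_nhds (half_pos hε))] with i hi w hw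
  refine mem_of_ball_subset_thickening (hC i).isComplete (hconv i) (hne i) (half_pos hε)
    fun y hy => ?_
  have hyS : y ∈ S := interior_subset <| hεS <| by
    rw [mem_ball] at hw hy ⊢
    linarith [dist_triangle y w x]
  obtain ⟨a, ha, hay⟩ := exists_dist_lt_of_hausdorffDist_lt' hyS hi
    (hausdorffEDist_ne_top_of_nonempty_of_bounded (hne i) ⟨x, interior_subset hx⟩
      (hC i).isBounded hS)
  exact mem_thickening_iff.2 ⟨a, ha, by rwa [dist_comm]⟩

end InnerProductSpace

section Equicontinuity

variable {X Y : Type*} [PseudoMetricSpace X] [PseudoMetricSpace Y]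

theorem lipschitzOnWith_of_tendsto {ι : Type*} {l : Filter ι} [l.NeBot] {F : ι → X → Y}
    {g : X → Y} {s : Set X} {L : ℝ≥0} (hF : ∀ᶠ i in l, LipschitzOnWith L (F i) s)
    (hg : ∀ x ∈ s, Tendsto (F · x) l (𝓝 (g x))) : LipschitzOnWith L g s :=
  .of_dist_le_mul fun x hx y hy =>
    le_of_tendsto ((hg x hx).dist (hg y hy)) (hF.mono fun _ hi => hi.dist_le_mul x hx y hy)

theorem IsCompact.tendstoUniformlyOn_of_lipschitzOnWith {ι : Type*} {l : Filter ι} [l.NeBot]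
    {F : ι → X → Y} {g : X → Y} {K : Set X} (hK : IsCompact K) {L : ℝ≥0}
    (hF : ∀ᶠ i in l, LipschitzOnWith L (F i) K) (hg : ∀ x ∈ K, Tendsto (F · x) l (𝓝 (g x))) :
    TendstoUniformlyOn F g l K := by
  have hgL := lipschitzOnWith_of_tendsto hF hg
  rw [Metric.tendstoUniformlyOn_iff]
  intro ε hε
  obtain ⟨δ, hδ, hLδ⟩ := exists_pos_mul_lt (by positivity : 0 < ε / 4) (L : ℝ)
  obtain ⟨t, htK, htfin, hcover⟩ := hK.finite_cover_balls hδ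
  have hnet : ∀ᶠ i in l, ∀ y ∈ t, dist (g y) (F i y) < ε / 2 :=
    htfin.eventually_all.2 fun y hy => (Metric.tendsto_nhds.1 (hg y (htK hy)) _ (half_pos hε)).mono
      fun _ hi => by rwa [dist_comm]
  filter_upwards [hF, hnet] with i hFi hneti x hx
  obtain ⟨y, hyt, hxy⟩ := mem_iUnion₂.1 (hcover hx)
  have hLxy : L * dist x y ≤ ε / 4 :=
    (mul_le_mul_of_nonneg_left (mem_ball.1 hxy).le L.2).trans hLδ.le
  have h₁ := hgL.dist_le_mul x hx y (htK hyt)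
  have h₂ := hFi.dist_le_mul y (htK hyt) x hx
  rw [dist_comm y x] at h₂
  linarith [dist_triangle4 (g x) (g y) (F i y) (F i x), hneti y hyt]

theorem cauchySeq_of_lipschitzOnWith {f : ℕ → X → Y} {V T : Set X} {x : X} {L : ℝ≥0}
    (hV : V ∈ 𝓝 x) (hf : ∀ᶠ j in atTop, LipschitzOnWith L (f j) V) (hx : x ∈ closure T)
    (hT : ∀ d ∈ T, CauchySeq fun j => f j d) : CauchySeq fun j => f j x := by
  rw [Metric.cauchySeq_iff]
  intro ε hε
  obtain ⟨δ, hδ, hLδ⟩ := exists_pos_mul_lt (by positivity : 0 < ε / 4) (L : ℝ)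
  obtain ⟨d, ⟨hdV, hdx⟩, hdT⟩ := mem_closure_iff_nhds.1 hx _ (inter_mem hV (ball_mem_nhds x hδ))
  obtain ⟨N₁, hN₁⟩ := Metric.cauchySeq_iff.1 (hT d hdT) (ε / 2) (half_pos hε)
  obtain ⟨N₂, hN₂⟩ := eventually_atTop.1 hf
  have hclose : ∀ k ≥ N₂, dist (f k x) (f k d) ≤ ε / 4 := fun k hk =>
    ((hN₂ k hk).dist_le_mul x (mem_of_mem_nhds hV) d hdV).trans <|
      (mul_le_mul_of_nonneg_left (by rw [dist_comm]; exact (mem_ball.1 hdx).le) L.2).trans hLδ.le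
  refine ⟨max N₁ N₂, fun m hm n hn => ?_⟩
  have hm' := hclose m (le_of_max_le_right hm)
  have hn' := hclose n (le_of_max_le_right hn)
  rw [dist_comm] at hn'
  linarith [dist_triangle4 (f m x) (f m d) (f n d) (f n x),
    hN₁ m (le_of_max_le_left hm) n (le_of_max_le_left hn)]

theorem exists_strictMono_forall_tendsto {ι : Type*} [Countable ι] {u : ℕ → ι → ℝ} {a b : ℝ}
    (hab : a ≤ b) (hu : ∀ k, ∀ᶠ i in atTop, u i k ∈ Icc a b) :
    ∃ σ : ℕ → ℕ, StrictMono σ ∧ ∀ k, ∃ c, Tendsto (fun j => u (σ j) k) atTop (𝓝 c) := by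
  obtain ⟨c, -, σ, hσ, hlim⟩ := isCompact_univ.tendsto_subseq
    (x := fun i k => projIcc a b hab (u i k)) fun _ => mem_univ _
  refine ⟨σ, hσ, fun k => ⟨c k, ?_⟩⟩
  refine ((continuous_subtype_val.tendsto _).comp (tendsto_pi_nhds.1 hlim k)).congr' ?_
  filter_upwards [hσ.tendsto_atTop.eventually (hu k)] with j hj
  simp [projIcc_of_mem hab hj]

theorem exists_strictMono_tendstoLocallyUniformlyOn [LocallyCompactSpace X] [SeparableSpace X]
    {U : Set X} (hU : IsOpen U) {f : ℕ → X → ℝ} {a b : ℝ} (hab : a ≤ b)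
    (hf : ∀ x ∈ U, ∀ᶠ i in atTop, f i x ∈ Icc a b)
    (hlip : ∀ x ∈ U, ∃ V ∈ 𝓝 x, ∃ L, ∀ᶠ i in atTop, LipschitzOnWith L (f i) V) :
    ∃ (σ : ℕ → ℕ) (g : X → ℝ), StrictMono σ ∧
      TendstoLocallyUniformlyOn (fun j => f (σ j)) g atTop U := by
  obtain ⟨T, hTU, hTc, hUT⟩ := (IsSeparable.of_separableSpace U).exists_countable_dense_subset
  have := hTc.to_subtype
  obtain ⟨σ, hσ, hT⟩ := exists_strictMono_forall_tendsto (u := fun i (d : T) => f i d) hab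
    fun d => hf d (hTU d.2)
  have hlipσ : ∀ x ∈ U, ∃ V ∈ 𝓝 x, ∃ L, ∀ᶠ j in atTop, LipschitzOnWith L (f (σ j)) V :=
    fun x hx => let ⟨V, hV, L, hL⟩ := hlip x hx; ⟨V, hV, L, hσ.tendsto_atTop.eventually hL⟩
  have hpt : ∀ x ∈ U, ∃ c, Tendsto (fun j => f (σ j) x) atTop (𝓝 c) := fun x hx => by
    obtain ⟨V, hV, L, hL⟩ := hlipσ x hx
    refine cauchySeq_tendsto_of_complete (cauchySeq_of_lipschitzOnWith hV hL (hUT hx) ?_)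
    exact fun d hd => (hT ⟨d, hd⟩).choose_spec.cauchySeq
  refine ⟨σ, fun x => limUnder atTop fun j => f (σ j) x, hσ,
    tendstoLocallyUniformlyOn_of_forall_exists_nhds fun x hx => ?_⟩
  obtain ⟨V, hV, L, hL⟩ := hlipσ x hx
  obtain ⟨K, hK, hKsub, hKc⟩ := local_compact_nhds (inter_mem hV (hU.mem_nhds hx))
  exact ⟨K, nhdsWithin_le_nhds hK, hKc.tendstoUniformlyOn_of_lipschitzOnWith
    (hL.mono fun _ hj => hj.mono (hKsub.trans inter_subset_left))
    fun y hy => tendsto_nhds_limUnder (hpt y (hKsub hy).2)⟩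

end Equicontinuity

theorem concaveOn_of_tendsto {E : Type*} [AddCommGroup E] [Module ℝ E] {ι : Type*}
    {l : Filter ι} [l.NeBot] {s : Set E} {C : ι → Set E} {F : ι → E → ℝ} {g : E → ℝ}
    (hs : Convex ℝ s) (hF : ∀ i, ConcaveOn ℝ (C i) (F i)) (hsC : ∀ x ∈ s, ∀ᶠ i in l, x ∈ C i)
    (hg : ∀ x ∈ s, Tendsto (F · x) l (𝓝 (g x))) : ConcaveOn ℝ s g := by
  refine ⟨hs, fun x hx y hy a b ha hb hab => le_of_tendsto_of_tendsto
    (((hg x hx).const_mul a).add ((hg y hy).const_mul b)) (hg _ (hs hx hy ha hb hab)) ?_⟩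
  filter_upwards [hsC x hx, hsC y hy] with i hix hiy
  exact (hF i).2 hix hiy ha hb hab

section Concave

variable {E : Type*} [NormedAddCommGroup E] [NormedSpace ℝ E]

theorem exists_eventually_lipschitzOnWith_of_concaveOn {ι : Type*} {l : Filter ι}
    {f : ι → E → ℝ} {C : ι → Set E} {a b : ℝ} (hf : ∀ i, ConcaveOn ℝ (C i) (f i))
    (hbound : ∀ i, ∀ y ∈ C i, f i y ∈ Icc a b) {x : E} {r : ℝ} (hr : 0 < r)
    (hball : ∀ᶠ i in l, ball x r ⊆ C i) :
    ∃ V ∈ 𝓝 x, ∃ L, ∀ᶠ i in l, LipschitzOnWith L (f i) V :=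
  ⟨ball x (r - r / 2), ball_mem_nhds x (by linarith), _, hball.mono fun i hi =>
    ((hf i).subset hi (convex_ball x r)).lipschitzOnWith_of_abs_le (half_pos hr) fun _ hy =>
      abs_le_max_abs_abs (hbound i _ (hi hy)).1 (hbound i _ (hi hy)).2⟩

theorem ConcaveOn.exists_tendsto_nhdsGT_zero {h : ℝ → ℝ} (hh : ConcaveOn ℝ (Ioc 0 1) h)
    (hbdd : BddBelow (h '' Ioc 0 1)) : ∃ c, Tendsto h (𝓝[>] 0) (𝓝 c) := by
  -- `h t = h 1 + (1 - t) * G t`, where the secant slope `G` is monotone by concavity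
  set G : ℝ → ℝ := fun t => (h t - h 1) / (1 - t)
  have hG : MonotoneOn G (Ioo 0 (1 / 2)) := by
    intro s hs t ht hst
    have := hh.neg.secant_mono (a := 1) ⟨one_pos, le_rfl⟩ ⟨hs.1, by linarith [hs.2]⟩
      ⟨ht.1, by linarith [ht.2]⟩ (by linarith [hs.2]) (by linarith [ht.2]) hst
    convert this using 1 <;> simp only [G, Pi.neg_apply] <;> rw [← neg_div_neg_eq] <;> ring_nf
  obtain ⟨m, hm⟩ := hbdd
  have hGbdd : BddBelow (G '' Ioo 0 (1 / 2)) := by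
    refine ⟨min 0 (2 * (m - h 1)), ?_⟩
    rintro _ ⟨t, ht, rfl⟩
    have hmt : m ≤ h t := hm (mem_image_of_mem h ⟨ht.1, by linarith [ht.2]⟩)
    rw [le_div_iff₀ (by linarith [ht.2])]
    nlinarith [min_le_left 0 (2 * (m - h 1)), min_le_right 0 (2 * (m - h 1)), ht.2]
  have hGlim := hG.tendsto_nhdsWithin_Ioo_right ⟨1 / 4, by norm_num, by norm_num⟩ hGbdd
  refine ⟨h 1 + (1 - 0) * sInf (G '' Ioo 0 (1 / 2)), ?_⟩
  refine (tendsto_const_nhds.add (((tendsto_const_nhds.sub tendsto_id).mono_left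
    nhdsWithin_le_nhds).mul hGlim)).congr' ?_
  filter_upwards [Ioo_mem_nhdsGT one_pos] with t ht
  have : 1 - t ≠ 0 := by linarith [ht.2]
  simp only [G, _root_.id]
  field_simp
  ring

end Concave

section Radial

variable {E : Type*} [NormedAddCommGroup E] [NormedSpace ℝ E] {S : Set E} {g : E → ℝ} {x z : E}

theorem Convex.lineMap_mem_interior (hS : Convex ℝ S) (hz : z ∈ interior S) (hx : x ∈ closure S)
    {t : ℝ} (ht : t ∈ Ioc 0 1) : lineMap x z t ∈ interior S := by
  rw [lineMap_apply_module, add_comm]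
  exact hS.combo_interior_closure_mem_interior hz hx ht.1 (sub_nonneg.2 ht.2) (by ring)

noncomputable def radialLimit (g : E → ℝ) (z x : E) : ℝ :=
  limUnder (𝓝[>] 0) fun t : ℝ => g (lineMap x z t)

theorem radialLimit_eq_of_continuousAt (hg : ContinuousAt g x) : radialLimit g z x = g x :=
  (hg.tendsto.comp ((lineMap_continuous.tendsto' 0 x (by simp)).mono_left
    nhdsWithin_le_nhds)).limUnder_eq

theorem eqOn_radialLimit [FiniteDimensional ℝ E] (hg : ConcaveOn ℝ (interior S) g) :
    EqOn (radialLimit g z) g (interior S) := fun _ hx =>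
  radialLimit_eq_of_continuousAt <| (hg.continuousOn_interior.mono (by simp)).continuousAt
    (isOpen_interior.mem_nhds hx)

theorem tendsto_radialLimit (hS : Convex ℝ S) (hz : z ∈ interior S)
    (hg : ConcaveOn ℝ (interior S) g) (hbdd : BddBelow (g '' interior S)) (hx : x ∈ closure S) :
    Tendsto (fun t : ℝ => g (lineMap x z t)) (𝓝[>] 0) (𝓝 (radialLimit g z x)) := by
  have hseg : MapsTo (lineMap x z) (Ioc (0 : ℝ) 1) (interior S) :=
    fun _ ht => hS.lineMap_mem_interior hz hx ht
  refine tendsto_nhds_limUnder (ConcaveOn.exists_tendsto_nhdsGT_zero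
    ((hg.comp_affineMap (lineMap x z)).subset hseg (convex_Ioc 0 1)) ?_)
  exact hbdd.mono (by rintro _ ⟨t, ht, rfl⟩; exact mem_image_of_mem g (hseg ht))

theorem radialLimit_mem (hS : Convex ℝ S) (hz : z ∈ interior S)
    (hg : ConcaveOn ℝ (interior S) g) (hbdd : BddBelow (g '' interior S)) {T : Set ℝ}
    (hT : IsClosed T) (hgT : MapsTo g (interior S) T) (hx : x ∈ closure S) :
    radialLimit g z x ∈ T :=
  hT.mem_of_tendsto (tendsto_radialLimit hS hz hg hbdd hx) <|
    eventually_of_mem (Ioc_mem_nhdsGT one_pos) fun _ ht => hgT (hS.lineMap_mem_interior hz hx ht)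

theorem concaveOn_radialLimit (hS : Convex ℝ S) (hz : z ∈ interior S)
    (hg : ConcaveOn ℝ (interior S) g) (hbdd : BddBelow (g '' interior S)) :
    ConcaveOn ℝ S (radialLimit g z) := by
  have hconc : ∀ t : ℝ,
      ConcaveOn ℝ ((lineMap · z t : E → E) ⁻¹' interior S) (g <| lineMap · z t) := by
    intro t
    have h := hg.comp_affineMap (homothety z (1 - t))
    have : ⇑(homothety z (1 - t)) = (lineMap · z t : E → E) := by
      ext x; rw [homothety_eq_lineMap, lineMap_apply_one_sub]
    rwa [this] at h
  exact concaveOn_of_tendsto (l := 𝓝[>] 0) hS hconc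
    (fun x hx => eventually_of_mem (Ioc_mem_nhdsGT one_pos)
      fun _ ht => hS.lineMap_mem_interior hz (subset_closure hx) ht)
    fun x hx => tendsto_radialLimit hS hz hg hbdd (subset_closure hx)

variable {F : ℕ → E → ℝ} {C : ℕ → Set E} {xs : ℕ → E}

theorem one_sub_mul_limsup_le {U : Set E} (hF : ∀ j, ConcaveOn ℝ (C j) (F j))
    (hF₀ : ∀ j, ∀ y ∈ C j, 0 ≤ F j y) (hzC : ∀ᶠ j in atTop, z ∈ C j)
    (hFg : TendstoLocallyUniformlyOn F g atTop U) (hxs : ∀ j, xs j ∈ C j)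
    (hlim : Tendsto xs atTop (𝓝 x)) {t : ℝ} (ht : t ∈ Ico 0 1) (hU : U ∈ 𝓝 (lineMap x z t))
    (hg : ContinuousAt g (lineMap x z t)) :
    (1 - t) * limsup (fun j => F j (xs j)) atTop ≤ g (lineMap x z t) := by
  have h1t : 0 < 1 - t := sub_pos.2 ht.2
  have hseg : Tendsto (fun j => F j (lineMap (xs j) z t)) atTop (𝓝 (g (lineMap x z t))) := by
    refine hFg.tendsto_comp hg.continuousWithinAt (mem_of_mem_nhds hU) ?_
    rw [nhdsWithin_eq_nhds.2 hU]
    exact hlim.lineMap tendsto_const_nhds tendsto_const_nhds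
  have hconc : ∀ᶠ j in atTop, F j (xs j) ≤ F j (lineMap (xs j) z t) / (1 - t) := by
    filter_upwards [hzC] with j hj
    have := (hF j).2 (hxs j) hj h1t.le ht.1 (by ring)
    simp only [lineMap_apply_module, smul_eq_mul] at this ⊢
    rw [le_div_iff₀' h1t]
    nlinarith [hF₀ j z hj, ht.1]
  rw [← le_div_iff₀' h1t]
  calc limsup (fun j => F j (xs j)) atTop
      ≤ limsup (fun j => F j (lineMap (xs j) z t) / (1 - t)) atTop :=
        limsup_le_limsup hconc (isCoboundedUnder_le_of_le atTop fun j => hF₀ j _ (hxs j))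
          (hseg.div_const _).isBoundedUnder_le
    _ = g (lineMap x z t) / (1 - t) := (hseg.div_const _).limsup_eq

theorem limsup_le_radialLimit [FiniteDimensional ℝ E] (hS : Convex ℝ S)
    (hz : z ∈ interior S) (hF : ∀ j, ConcaveOn ℝ (C j) (F j)) (hF₀ : ∀ j, ∀ y ∈ C j, 0 ≤ F j y)
    (hzC : ∀ᶠ j in atTop, z ∈ C j) (hFg : TendstoLocallyUniformlyOn F g atTop (interior S))
    (hg : ConcaveOn ℝ (interior S) g) (hbdd : BddBelow (g '' interior S)) (hx : x ∈ closure S)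
    (hxs : ∀ j, xs j ∈ C j) (hlim : Tendsto xs atTop (𝓝 x)) :
    limsup (fun j => F j (xs j)) atTop ≤ radialLimit g z x := by
  have hcont : ContinuousOn g (interior S) := by simpa using hg.continuousOn_interior
  set L := limsup (fun j => F j (xs j)) atTop
  refine le_of_tendsto_of_tendsto (f := fun t => (1 - t) * L) (b := 𝓝[>] 0) ?_
    (tendsto_radialLimit hS hz hg hbdd hx) ?_
  · have : Tendsto (fun t : ℝ => (1 - t) * L) (𝓝 0) (𝓝 ((1 - 0) * L)) :=
      (tendsto_const_nhds.sub tendsto_id).mul_const L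
    simpa using this.mono_left nhdsWithin_le_nhds
  · filter_upwards [Ioo_mem_nhdsGT one_pos] with t ht
    have hU := isOpen_interior.mem_nhds (hS.lineMap_mem_interior hz hx ⟨ht.1, ht.2.le⟩)
    exact one_sub_mul_limsup_le hF hF₀ hzC hFg hxs hlim ⟨ht.1.le, ht.2⟩ hU (hcont.continuousAt hU)

end Radial

/-- Compactness of equi-bounded concave functions on Hausdorff-converging convex bodies:
if compact convex sets `S_i ⊆ ℝ^n` with nonempty interior Hausdorff-converge to a compact
convex set `S` with nonempty interior, and `φ_i : S_i → [0,1]` are concave, then there are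
a concave `φ : S → [0,1]` and a subsequence along which `φ_i → φ` uniformly on every
compact subset of the interior of `S`, and for every boundary point `x ∈ ∂S` and every
sequence `x_j ∈ S_{i_j}` converging to `x`, `limsup φ_{i_j}(x_j) ≤ φ(x)`. -/
theorem concave_functions_compactness_on_converging_bodies
    (n : ℕ)
    (S : Set (EuclideanSpace ℝ (Fin n)))
    (Si : ℕ → Set (EuclideanSpace ℝ (Fin n)))
    (hS_compact : IsCompact S) (hS_conv : Convex ℝ S) (hS_int : (interior S).Nonempty)
    (hSi_compact : ∀ i, IsCompact (Si i)) (hSi_conv : ∀ i, Convex ℝ (Si i))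
    (hSi_int : ∀ i, (interior (Si i)).Nonempty)
    (hconv : Tendsto (fun i => hausdorffDist (Si i) S) atTop (nhds 0))
    (φi : ℕ → EuclideanSpace ℝ (Fin n) → ℝ)
    (hφi_range : ∀ i, ∀ x ∈ Si i, φi i x ∈ Icc (0 : ℝ) 1)
    (hφi_conc : ∀ i, ConcaveOn ℝ (Si i) (φi i)) :
    ∃ (φ : EuclideanSpace ℝ (Fin n) → ℝ) (idx : ℕ → ℕ), StrictMono idx ∧
      (∀ x ∈ S, φ x ∈ Icc (0 : ℝ) 1) ∧
      ConcaveOn ℝ S φ ∧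
      (∀ K : Set (EuclideanSpace ℝ (Fin n)), K ⊆ interior S → IsCompact K →
        TendstoUniformlyOn (fun j => φi (idx j)) φ atTop K) ∧
      (∀ x ∈ frontier S, ∀ xj : ℕ → EuclideanSpace ℝ (Fin n),
        (∀ j, xj j ∈ Si (idx j)) → Tendsto xj atTop (nhds x) →
          limsup (fun j => φi (idx j) (xj j)) atTop ≤ φ x) := by
  obtain ⟨z, hz⟩ := hS_int
  have hball : ∀ x ∈ interior S, ∃ r > 0, ∀ᶠ i in atTop, ball x r ⊆ Si i := fun x hx =>
    eventually_ball_subset_of_tendsto_hausdorffDist hS_compact.isBounded hSi_compact hSi_conv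
      (fun i => (hSi_int i).mono interior_subset) hconv hx
  have hmem : ∀ x ∈ interior S, ∀ᶠ i in atTop, x ∈ Si i := fun x hx =>
    let ⟨r, hr, h⟩ := hball x hx; h.mono fun _ hi => hi (mem_ball_self hr)
  obtain ⟨σ, φ, hσ, hφ⟩ := exists_strictMono_tendstoLocallyUniformlyOn isOpen_interior
    zero_le_one (fun x hx => (hmem x hx).mono fun i hi => hφi_range i x hi) fun x hx =>
      let ⟨_, hr, h⟩ := hball x hx
      exists_eventually_lipschitzOnWith_of_concaveOn hφi_conc hφi_range hr h
  have hmemσ : ∀ x ∈ interior S, ∀ᶠ j in atTop, x ∈ Si (σ j) := fun x hx =>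
    hσ.tendsto_atTop.eventually (hmem x hx)
  have hφ_conc : ConcaveOn ℝ (interior S) φ := concaveOn_of_tendsto hS_conv.interior
    (fun j => hφi_conc (σ j)) hmemσ fun x hx => hφ.tendsto_at hx
  have hφ_range : MapsTo φ (interior S) (Icc 0 1) := fun x hx => isClosed_Icc.mem_of_tendsto
    (hφ.tendsto_at hx) ((hmemσ x hx).mono fun j hj => hφi_range _ _ hj)
  have hφ_bdd : BddBelow (φ '' interior S) := bddBelow_Icc.mono hφ_range.image_subset
  refine ⟨radialLimit φ z, σ, hσ,
    fun x hx => radialLimit_mem hS_conv hz hφ_conc hφ_bdd isClosed_Icc hφ_range (subset_closure hx),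
    concaveOn_radialLimit hS_conv hz hφ_conc hφ_bdd, fun K hK hKc => ?_,
    fun x hx xs hxs hlim => ?_⟩
  · exact ((tendstoLocallyUniformlyOn_iff_forall_isCompact isOpen_interior).1 hφ K hK hKc
      ).congr_right ((eqOn_radialLimit hφ_conc).symm.mono hK)
  · exact limsup_le_radialLimit hS_conv hz (fun j => hφi_conc (σ j))
      (fun j y hy => (hφi_range _ y hy).1) (hmemσ z hz) hφ hφ_conc hφ_bdd
      (frontier_subset_closure hx) hxs hlim
end

section
/- Let S ⊂ ℝ^k be a convex set with 0 ∈ S, let m ≥ 1 be an integer, and let φ : S → [0,∞) be a function such that φ^{1/m} is concave on S. Let μ be the measure on S with density φ with respect to k-dimensional Lebesgue measure. Then for every measurable set B ⊆ S and every λ ∈ [0,1], μ(λB) ≥ λ^{k+m}·μ(B), where λB = {λ·b : b ∈ B}. -/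
/-!
Concavity of `φ^{1/m}` together with `φ ≥ 0` at the origin gives `λ φ(v)^{1/m} ≤ φ(λv)^{1/m}`,
i.e. `λ^m φ(v) ≤ φ(λv)` on `S`. Substituting `u = λv` in `∫_{λB} φ` produces the Jacobian `λ^k`,
so `μ(λB) = λ^k ∫_B φ(λv) dv ≥ λ^{k+m} μ(B)`.
-/

open Set MeasureTheory Pointwise Module

section Concave

variable {E : Type*} [AddCommGroup E] [Module ℝ E] {S : Set E} {lam : ℝ}

theorem ConcaveOn.mul_apply_le_apply_smul {g : E → ℝ} (hg : ConcaveOn ℝ S g) (h0 : (0 : E) ∈ S)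
    (hg0 : 0 ≤ g 0) (hlam : lam ∈ Icc (0 : ℝ) 1) {v : E} (hv : v ∈ S) :
    lam * g v ≤ g (lam • v) := by
  have h := hg.2 h0 hv (sub_nonneg.2 hlam.2) hlam.1 (sub_add_cancel 1 lam)
  rw [smul_zero, zero_add, smul_eq_mul, smul_eq_mul] at h
  linarith [mul_nonneg (sub_nonneg.2 hlam.2) hg0]

theorem ConcaveOn.pow_mul_le_apply_smul_of_rpow {φ : E → ℝ} {m : ℕ} (hm : m ≠ 0)
    (hφ : ConcaveOn ℝ S fun u => φ u ^ ((1 : ℝ) / m)) (h0 : (0 : E) ∈ S)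
    (hφ_nonneg : ∀ u ∈ S, 0 ≤ φ u) (hlam : lam ∈ Icc (0 : ℝ) 1) {v : E} (hv : v ∈ S) :
    lam ^ m * φ v ≤ φ (lam • v) := by
  have hroot : ∀ u ∈ S, (φ u ^ ((1 : ℝ) / m)) ^ m = φ u := fun u hu => by
    rw [one_div, Real.rpow_inv_natCast_pow (hφ_nonneg u hu) hm]
  have hle := hφ.mul_apply_le_apply_smul h0 (Real.rpow_nonneg (hφ_nonneg 0 h0) _) hlam hv
  calc lam ^ m * φ v = (lam * φ v ^ ((1 : ℝ) / m)) ^ m := by rw [mul_pow, hroot v hv]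
    _ ≤ (φ (lam • v) ^ ((1 : ℝ) / m)) ^ m :=
      pow_le_pow_left₀ (mul_nonneg hlam.1 (Real.rpow_nonneg (hφ_nonneg v hv) _)) hle m
    _ = φ (lam • v) := hroot _ (hφ.1.smul_mem_of_zero_mem h0 hv hlam)

end Concave

section ChangeOfVariables

variable {E : Type*} [NormedAddCommGroup E] [NormedSpace ℝ E] [MeasurableSpace E] [BorelSpace E]
  [FiniteDimensional ℝ E] (μ : Measure E) [μ.IsAddHaarMeasure] {r : ℝ}

theorem setLIntegral_comp_smul (hr : r ≠ 0) (s : Set E) (f : E → ENNReal) :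
    ∫⁻ x in s, f (r • x) ∂μ = ENNReal.ofReal |(r ^ finrank ℝ E)⁻¹| * ∫⁻ y in r • s, f y ∂μ := by
  let e : E ≃ᵐ E := MeasurableEquiv.smul₀ r hr
  have hpre : e ⁻¹' (r • s) = s := ext fun x => smul_mem_smul_set_iff₀ hr s x
  calc ∫⁻ x in s, f (r • x) ∂μ = ∫⁻ y, f y ∂(μ.restrict (e ⁻¹' (r • s))).map e := by
        rw [hpre, lintegral_map_equiv]; rfl
    _ = _ := by
        rw [← e.restrict_map, MeasurableEquiv.coe_smul₀, Measure.map_addHaar_smul μ hr, Measure.restrict_smul,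
          lintegral_smul_measure, smul_eq_mul]

theorem setLIntegral_smul_set (hr : r ≠ 0) (s : Set E) (f : E → ENNReal) :
    ∫⁻ y in r • s, f y ∂μ = ENNReal.ofReal |r ^ finrank ℝ E| * ∫⁻ x in s, f (r • x) ∂μ := by
  rw [setLIntegral_comp_smul μ hr, ← mul_assoc, ← ENNReal.ofReal_mul (abs_nonneg _), ← abs_mul,
    mul_inv_cancel₀ (pow_ne_zero _ hr), abs_one, ENNReal.ofReal_one, one_mul]

end ChangeOfVariables

theorem scaled_set_measure_lower_bound_general
    (k m : ℕ) (hm : 1 ≤ m)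
    (S : Set (EuclideanSpace ℝ (Fin k)))
    (hS_zero : (0 : EuclideanSpace ℝ (Fin k)) ∈ S)
    (φ : EuclideanSpace ℝ (Fin k) → ℝ)
    (hφ_nonneg : ∀ u ∈ S, 0 ≤ φ u)
    (hφ_conc : ConcaveOn ℝ S (fun u => φ u ^ ((1 : ℝ) / m)))
    (B : Set (EuclideanSpace ℝ (Fin k))) (hB_sub : B ⊆ S) (hB_meas : MeasurableSet B)
    (lam : ℝ) (hlam : lam ∈ Icc (0 : ℝ) 1) :
    ENNReal.ofReal (lam ^ (k + m)) * ∫⁻ u in B, ENNReal.ofReal (φ u) ≤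
      ∫⁻ u in lam • B, ENNReal.ofReal (φ u) := by
  rcases hlam.1.eq_or_lt with rfl | hpos
  · simp [zero_pow (by omega : k + m ≠ 0)]
  have hpt : ∀ u ∈ B, ENNReal.ofReal (lam ^ m) * ENNReal.ofReal (φ u)
      ≤ ENNReal.ofReal (φ (lam • u)) := fun u hu => by
    rw [← ENNReal.ofReal_mul (by positivity)]
    exact ENNReal.ofReal_le_ofReal <| hφ_conc.pow_mul_le_apply_smul_of_rpow (by omega) hS_zero
      hφ_nonneg hlam (hB_sub hu)
  calc ENNReal.ofReal (lam ^ (k + m)) * ∫⁻ u in B, ENNReal.ofReal (φ u)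
      = ENNReal.ofReal (lam ^ k) * ∫⁻ u in B, ENNReal.ofReal (lam ^ m) * ENNReal.ofReal (φ u) := by
        rw [lintegral_const_mul' _ _ ENNReal.ofReal_ne_top, pow_add,
          ENNReal.ofReal_mul (by positivity), mul_assoc]
    _ ≤ ENNReal.ofReal (lam ^ k) * ∫⁻ u in B, ENNReal.ofReal (φ (lam • u)) := by
        exact mul_le_mul_right (setLIntegral_mono' hB_meas hpt) _
    _ = ∫⁻ u in lam • B, ENNReal.ofReal (φ u) := by
        rw [setLIntegral_smul_set volume hpos.ne', finrank_euclideanSpace_fin,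
          abs_of_nonneg (by positivity)]

/-- Homogeneity-type estimate for measures with `m`-concave density: if `S ⊆ ℝ^k` is
convex with `0 ∈ S` and `φ : S → [0,∞)` has `φ^{1/m}` concave, then the measure
`μ = φ·vol_k` satisfies `μ(λB) ≥ λ^{k+m}·μ(B)` for every measurable `B ⊆ S` and
every `λ ∈ [0,1]`. -/
theorem scaled_set_measure_lower_bound
    (k m : ℕ) (hm : 1 ≤ m)
    (S : Set (EuclideanSpace ℝ (Fin k)))
    (hS_conv : Convex ℝ S) (hS_zero : (0 : EuclideanSpace ℝ (Fin k)) ∈ S)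
    (φ : EuclideanSpace ℝ (Fin k) → ℝ)
    (hφ_nonneg : ∀ u ∈ S, 0 ≤ φ u)
    (hφ_conc : ConcaveOn ℝ S (fun u => φ u ^ ((1 : ℝ) / m)))
    (B : Set (EuclideanSpace ℝ (Fin k))) (hB_sub : B ⊆ S) (hB_meas : MeasurableSet B)
    (lam : ℝ) (hlam : lam ∈ Icc (0 : ℝ) 1) :
    ENNReal.ofReal (lam ^ (k + m)) * ∫⁻ u in B, ENNReal.ofReal (φ u) ≤
      ∫⁻ u in lam • B, ENNReal.ofReal (φ u) :=
  scaled_set_measure_lower_bound_general k m hm S hS_zero φ hφ_nonneg hφ_conc B hB_sub hB_meas lam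
    hlam
end

section
/- Let ρ > 0, let S ⊂ ℝ^k be a compact convex set of diameter at least ρ, let m ≥ 1 be an integer, and let φ : S → [0,∞) be such that φ^{1/m} is concave on S, with μ = φ·vol_k a probability measure on S (vol_k being k-dimensional Lebesgue measure). Then for every x ∈ ℝ^k, every r > 0 and every positive integer N with N ≤ ρ/(4r), μ(B(x,r) ∩ S) ≤ 2^{k+m}/N. In particular there is a constant C depending only on k and m such that μ(B(x,r) ∩ S) ≤ C·r/ρ whenever 0 < r ≤ ρ/8. -/
open Set MeasureTheory Metric Module
open scoped ENNReal

/-!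
Pick two points of `S` at distance more than `2r(N - 1)` and `N` equally spaced points `yᵢ` of
`S` on the segment between them. The copies `Tᵢ` of `B(x,r) ∩ S` shrunk by `1/2` towards `yᵢ` lie
in `S` by convexity and are pairwise disjoint because the `yᵢ` are `2r`-separated. Concavity of
`φ^{1/m}` gives `φ(v/2 + yᵢ/2) ≥ 2^{-m} φ(v)`, and the Jacobian of the homothety is `2^{-k}`, so
each `Tᵢ` carries mass at least `2^{-(k+m)} μ(B(x,r) ∩ S)`. Summing over the `N` copies gives
`N 2^{-(k+m)} μ(B(x,r) ∩ S) ≤ 1`.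
-/

theorem ConcaveOn.pow_mul_le_comp_homothety {E : Type*} [AddCommGroup E] [Module ℝ E]
    {S : Set E} {φ : E → ℝ} {m : ℕ} (hm : m ≠ 0) (hφ : ∀ u ∈ S, 0 ≤ φ u)
    (hconc : ConcaveOn ℝ S fun u => φ u ^ ((1 : ℝ) / m)) {y v : E} (hy : y ∈ S) (hv : v ∈ S)
    {c : ℝ} (hc₀ : 0 ≤ c) (hc₁ : c ≤ 1) :
    c ^ m * φ v ≤ φ (AffineMap.homothety y c v) := by
  have hmem : AffineMap.homothety y c v ∈ S :=
    AffineMap.homothety_eq_lineMap y c v ▸ hconc.1.lineMap_mem hy hv ⟨hc₀, hc₁⟩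
  have hcomb : (1 - c) • y + c • v = AffineMap.homothety y c v := by
    rw [AffineMap.homothety_eq_lineMap, AffineMap.lineMap_apply_module]
  have hroot : c * φ v ^ ((1 : ℝ) / m) ≤ φ (AffineMap.homothety y c v) ^ ((1 : ℝ) / m) := by
    have := hconc.2 hy hv (sub_nonneg.2 hc₁) hc₀ (sub_add_cancel 1 c)
    rw [hcomb, smul_eq_mul, smul_eq_mul] at this
    nlinarith [Real.rpow_nonneg (hφ y hy) ((1 : ℝ) / m)]
  have hpow := pow_le_pow_left₀
    (mul_nonneg hc₀ (Real.rpow_nonneg (hφ v hv) ((1 : ℝ) / m))) hroot m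
  rwa [mul_pow, one_div, Real.rpow_inv_natCast_pow (hφ v hv) hm,
    Real.rpow_inv_natCast_pow (hφ _ hmem) hm] at hpow

theorem exists_lt_dist_of_lt_diam {α : Type*} [PseudoMetricSpace α] {s : Set α} {t : ℝ}
    (ht : 0 ≤ t) (h : t < diam s) : ∃ a ∈ s, ∃ b ∈ s, t < dist a b := by
  by_contra! H
  exact (diam_le_of_forall_dist_le ht H).not_gt h

section Normed

variable {E : Type*} [NormedAddCommGroup E] [NormedSpace ℝ E]

theorem Convex.exists_pairwise_lt_dist {S : Set E} (hS : Convex ℝ S) {a b : E} (ha : a ∈ S)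
    (hb : b ∈ S) {N : ℕ} {δ : ℝ} (h : ((N : ℝ) - 1) * δ < dist a b) :
    ∃ y : Fin N → E, (∀ i, y i ∈ S) ∧ Pairwise fun i j => δ < dist (y i) (y j) := by
  refine ⟨fun i => AffineMap.lineMap a b ((i : ℝ) / (N - 1)), fun i => ?_, fun i j hij => ?_⟩
  · have hi : (i : ℝ) ≤ N - 1 := by
      rw [le_sub_iff_add_le]; exact_mod_cast i.isLt
    have hN : (0 : ℝ) ≤ N - 1 := i.val.cast_nonneg.trans hi
    exact hS.lineMap_mem ha hb ⟨div_nonneg i.val.cast_nonneg hN, div_le_one_of_le₀ hi hN⟩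
  · have hN : (0 : ℝ) < N - 1 := by
      have : 2 ≤ N := by
        by_contra! hN; interval_cases N <;> [exact i.elim0; exact hij (Subsingleton.elim i j)]
      rw [sub_pos]; exact_mod_cast this
    have hij' : (1 : ℝ) ≤ |(i : ℝ) - j| := by
      have : (1 : ℤ) ≤ |(i : ℤ) - j| :=
        Int.one_le_abs (sub_ne_zero.2 (by exact_mod_cast Fin.val_ne_of_ne hij))
      exact_mod_cast this
    dsimp only
    rw [dist_lineMap_lineMap, Real.dist_eq, ← sub_div, abs_div, abs_of_pos hN]
    calc δ < dist a b / (N - 1) := by rw [lt_div_iff₀ hN]; linarith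
      _ ≤ |(i : ℝ) - j| / (N - 1) * dist a b := by
        rw [div_mul_eq_mul_div]; gcongr; nlinarith [dist_nonneg (x := a) (y := b)]

theorem image_homothety_closedBall_subset (y x : E) (c r : ℝ) :
    AffineMap.homothety y c '' closedBall x r ⊆
      closedBall (AffineMap.homothety y c x) (|c| * r) := by
  rintro _ ⟨v, hv, rfl⟩
  rw [mem_closedBall, dist_eq_norm, AffineMap.homothety_apply, AffineMap.homothety_apply]
  simp only [vsub_eq_sub, vadd_eq_add, add_sub_add_right_eq_sub, ← smul_sub,
    sub_sub_sub_cancel_right, norm_smul, Real.norm_eq_abs]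
  exact mul_le_mul_of_nonneg_left (mem_closedBall_iff_norm.1 hv) (abs_nonneg c)

theorem dist_homothety_homothety (y z x : E) (c : ℝ) :
    dist (AffineMap.homothety y c x) (AffineMap.homothety z c x) = |1 - c| * dist y z := by
  rw [dist_eq_norm, dist_eq_norm, AffineMap.homothety_apply, AffineMap.homothety_apply]
  simp only [vsub_eq_sub, vadd_eq_add]
  rw [show c • (x - y) + y - (c • (x - z) + z) = (1 - c) • (y - z) by module, norm_smul,
    Real.norm_eq_abs]

theorem disjoint_image_homothety {A : Set E} {x : E} {r : ℝ} (hA : A ⊆ closedBall x r)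
    {y z : E} {c : ℝ} (h : 2 * (|c| * r) < |1 - c| * dist y z) :
    Disjoint (AffineMap.homothety y c '' A) (AffineMap.homothety z c '' A) := by
  refine Disjoint.mono ((image_mono hA).trans (image_homothety_closedBall_subset y x c r))
    ((image_mono hA).trans (image_homothety_closedBall_subset z x c r))
    (closedBall_disjoint_closedBall ?_)
  rwa [dist_homothety_homothety, ← two_mul]

theorem hasFDerivAt_homothety (y : E) (c : ℝ) (v : E) :
    HasFDerivAt (AffineMap.homothety y c) (c • ContinuousLinearMap.id ℝ E) v := by
  have : ⇑(AffineMap.homothety y c) = fun v => c • v + (1 - c) • y := by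
    ext v; rw [AffineMap.homothety_eq_lineMap, AffineMap.lineMap_apply_module, add_comm]
  rw [this]
  exact ((hasFDerivAt_id v).const_smul c).add_const _

end Normed

section Haar

variable {E : Type*} [NormedAddCommGroup E] [NormedSpace ℝ E] [FiniteDimensional ℝ E]
  [MeasurableSpace E] [BorelSpace E] (μ : Measure E) [μ.IsAddHaarMeasure]

theorem setLIntegral_image_homothety {A : Set E} (hA : MeasurableSet A) (y : E) {c : ℝ}
    (hc : c ≠ 0) (f : E → ℝ≥0∞) :
    ∫⁻ u in AffineMap.homothety y c '' A, f u ∂μ =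
      ENNReal.ofReal (|c| ^ finrank ℝ E) * ∫⁻ v in A, f (AffineMap.homothety y c v) ∂μ := by
  rw [lintegral_image_eq_lintegral_abs_det_fderiv_mul μ hA
    (fun v _ => (hasFDerivAt_homothety y c v).hasFDerivWithinAt)
    (AffineMap.homothety_injective y hc).injOn, ← lintegral_const_mul' _ _ ENNReal.ofReal_ne_top]
  congr! 3
  rw [ContinuousLinearMap.det, ContinuousLinearMap.toLinearMap_smul, LinearMap.det_smul,
    ContinuousLinearMap.coe_id, LinearMap.det_id, mul_one, abs_pow]

theorem pow_mul_setLIntegral_le_setLIntegral_image_homothety {S : Set E} {φ : E → ℝ} {m : ℕ}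
    (hm : m ≠ 0) (hφ : ∀ u ∈ S, 0 ≤ φ u) (hconc : ConcaveOn ℝ S fun u => φ u ^ ((1 : ℝ) / m))
    {A : Set E} (hA : MeasurableSet A) (hAS : A ⊆ S) {y : E} (hy : y ∈ S) {c : ℝ} (hc₀ : 0 < c)
    (hc₁ : c ≤ 1) :
    ENNReal.ofReal (c ^ (finrank ℝ E + m)) * ∫⁻ u in A, ENNReal.ofReal (φ u) ∂μ ≤
      ∫⁻ u in AffineMap.homothety y c '' A, ENNReal.ofReal (φ u) ∂μ := by
  rw [setLIntegral_image_homothety μ hA y hc₀.ne', abs_of_pos hc₀, pow_add,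
    ENNReal.ofReal_mul (by positivity), mul_assoc,
    ← lintegral_const_mul' _ _ ENNReal.ofReal_ne_top]
  refine mul_le_mul_right (setLIntegral_mono' hA fun v hv => ?_) _
  rw [← ENNReal.ofReal_mul (by positivity)]
  exact ENNReal.ofReal_le_ofReal (hconc.pow_mul_le_comp_homothety hm hφ hy (hAS hv) hc₀.le hc₁)

theorem setLIntegral_le_two_pow_div_mul_setLIntegral {S : Set E} {φ : E → ℝ} {m : ℕ}
    (hm : m ≠ 0) (hφ : ∀ u ∈ S, 0 ≤ φ u) (hconc : ConcaveOn ℝ S fun u => φ u ^ ((1 : ℝ) / m))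
    {A : Set E} (hA : MeasurableSet A) (hAS : A ⊆ S) {x : E} {r : ℝ} (hAx : A ⊆ closedBall x r)
    {N : ℕ} (hN : 0 < N) {y : Fin N → E} (hy : ∀ i, y i ∈ S)
    (hsep : Pairwise fun i j => 2 * r < dist (y i) (y j)) :
    ∫⁻ u in A, ENNReal.ofReal (φ u) ∂μ ≤
      ENNReal.ofReal (2 ^ (finrank ℝ E + m) / N) * ∫⁻ u in S, ENNReal.ofReal (φ u) ∂μ := by
  set p := finrank ℝ E + m
  set I := ∫⁻ u in A, ENNReal.ofReal (φ u) ∂μ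
  set T : Fin N → Set E := fun i => AffineMap.homothety (y i) (2⁻¹ : ℝ) '' A
  have hT_meas : ∀ i, MeasurableSet (T i) := fun i =>
    hA.image_of_continuousOn_injOn (AffineMap.homothety_continuous _ _).continuousOn
      (AffineMap.homothety_injective _ (by norm_num)).injOn
  have hT_disj : Pairwise (Function.onFun Disjoint T) := fun i j hij =>
    disjoint_image_homothety hAx (by norm_num; linarith [hsep hij])
  have hT_sub : (⋃ i, T i) ⊆ S := iUnion_subset fun i => by
    rintro _ ⟨v, hv, rfl⟩
    rw [AffineMap.homothety_eq_lineMap]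
    exact hconc.1.lineMap_mem (hy i) (hAS hv) ⟨by norm_num, by norm_num⟩
  have hsum : N * (ENNReal.ofReal ((2⁻¹ : ℝ) ^ p) * I) ≤ ∫⁻ u in S, ENNReal.ofReal (φ u) ∂μ :=
    calc N * (ENNReal.ofReal ((2⁻¹ : ℝ) ^ p) * I)
      _ = ∑ _i : Fin N, ENNReal.ofReal ((2⁻¹ : ℝ) ^ p) * I := by
        rw [Finset.sum_const, Finset.card_univ, Fintype.card_fin, nsmul_eq_mul]
      _ ≤ ∑ i, ∫⁻ u in T i, ENNReal.ofReal (φ u) ∂μ := Finset.sum_le_sum fun i _ =>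
        pow_mul_setLIntegral_le_setLIntegral_image_homothety μ hm hφ hconc hA hAS (hy i)
          (by norm_num) (by norm_num)
      _ = ∫⁻ u in ⋃ i, T i, ENNReal.ofReal (φ u) ∂μ := by
        rw [lintegral_iUnion hT_meas hT_disj, tsum_fintype]
      _ ≤ ∫⁻ u in S, ENNReal.ofReal (φ u) ∂μ := lintegral_mono_set hT_sub
  have hone : (2 : ℝ) ^ p / N * (N * 2⁻¹ ^ p) = 1 := by
    rw [inv_pow]; field_simp
  calc I = ENNReal.ofReal (2 ^ p / N * (N * 2⁻¹ ^ p)) * I := by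
        rw [hone, ENNReal.ofReal_one, one_mul]
    _ = ENNReal.ofReal (2 ^ p / N) * (N * (ENNReal.ofReal ((2⁻¹ : ℝ) ^ p) * I)) := by
        rw [ENNReal.ofReal_mul (by positivity), ENNReal.ofReal_mul (by positivity),
          ENNReal.ofReal_natCast]
        ring
    _ ≤ _ := by gcongr

theorem setLIntegral_closedBall_inter_le {S : Set E} (hS : MeasurableSet S) {φ : E → ℝ}
    {m : ℕ} (hm : m ≠ 0) (hφ : ∀ u ∈ S, 0 ≤ φ u)
    (hconc : ConcaveOn ℝ S fun u => φ u ^ ((1 : ℝ) / m)) (x : E) {r : ℝ} (hr : 0 ≤ r) {N : ℕ}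
    (hN : 0 < N) (hdiam : ((N : ℝ) - 1) * (2 * r) < diam S) :
    ∫⁻ u in closedBall x r ∩ S, ENNReal.ofReal (φ u) ∂μ ≤
      ENNReal.ofReal (2 ^ (finrank ℝ E + m) / N) * ∫⁻ u in S, ENNReal.ofReal (φ u) ∂μ := by
  have hN' : (0 : ℝ) ≤ N - 1 := by
    rw [sub_nonneg]; exact_mod_cast hN
  obtain ⟨a, ha, b, hb, hab⟩ := exists_lt_dist_of_lt_diam (by positivity) hdiam
  obtain ⟨y, hyS, hsep⟩ := hconc.1.exists_pairwise_lt_dist ha hb hab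
  exact setLIntegral_le_two_pow_div_mul_setLIntegral μ hm hφ hconc
    (measurableSet_closedBall.inter hS) inter_subset_right inter_subset_left hN hyS hsep

end Haar

/-- Small balls have small measure, uniformly over probability measures with
`m`-concave density supported on a compact convex set `S ⊆ ℝ^k` of diameter at least
`ρ`: for every `x`, `r > 0` and positive integer `N ≤ ρ/(4r)`,
`μ(B(x,r) ∩ S) ≤ 2^{k+m}/N`; in particular there is a constant `C = C(k,m) > 0` such
that `μ(B(x,r) ∩ S) ≤ C·r/ρ` whenever `0 < r ≤ ρ/8`. -/
theorem small_ball_measure_bound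
    (k m : ℕ) (hm : 1 ≤ m) :
    ∃ C : ℝ, 0 < C ∧
      ∀ (ρ : ℝ), 0 < ρ →
      ∀ S : Set (EuclideanSpace ℝ (Fin k)),
        IsCompact S → Convex ℝ S → ρ ≤ Metric.diam S →
      ∀ φ : EuclideanSpace ℝ (Fin k) → ℝ,
        (∀ u ∈ S, 0 ≤ φ u) →
        ConcaveOn ℝ S (fun u => φ u ^ ((1 : ℝ) / m)) →
        (∫⁻ u in S, ENNReal.ofReal (φ u)) = 1 →
        (∀ (x : EuclideanSpace ℝ (Fin k)) (r : ℝ) (N : ℕ), 0 < r → 0 < N →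
            (N : ℝ) ≤ ρ / (4 * r) →
            ∫⁻ u in closedBall x r ∩ S, ENNReal.ofReal (φ u) ≤
              ENNReal.ofReal (2 ^ (k + m) / N)) ∧
        (∀ (x : EuclideanSpace ℝ (Fin k)) (r : ℝ), 0 < r → r ≤ ρ / 8 →
            ∫⁻ u in closedBall x r ∩ S, ENNReal.ofReal (φ u) ≤
              ENNReal.ofReal (C * r / ρ)) := by
  refine ⟨8 * 2 ^ (k + m), by positivity, fun ρ hρ S hS _ hdiam φ hφ hconc hint => ?_⟩
  have hball := setLIntegral_closedBall_inter_le volume hS.measurableSet (by omega) hφ hconc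
  simp only [finrank_euclideanSpace_fin, hint, mul_one] at hball
  have hN_bound : ∀ (x : EuclideanSpace ℝ (Fin k)) (r : ℝ) (N : ℕ), 0 < r → 0 < N →
      (N : ℝ) ≤ ρ / (4 * r) →
      ∫⁻ u in closedBall x r ∩ S, ENNReal.ofReal (φ u) ≤ ENNReal.ofReal (2 ^ (k + m) / N) :=
    fun x r N hr hN hNρ => hball x hr.le hN <| by
      rw [le_div_iff₀ (by positivity)] at hNρ
      nlinarith
  refine ⟨hN_bound, fun x r hr hrρ => ?_⟩
  have hz : 1 ≤ ρ / (4 * r) := by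
    rw [le_div_iff₀ (by positivity)]; linarith
  have hN := Nat.div_two_lt_floor hz
  refine (hN_bound x r _ hr (Nat.floor_pos.2 hz) (Nat.floor_le (by positivity))).trans
    (ENNReal.ofReal_le_ofReal ?_)
  calc (2 : ℝ) ^ (k + m) / ⌊ρ / (4 * r)⌋₊ ≤ 2 ^ (k + m) / (ρ / (4 * r) / 2) :=
        div_le_div_of_nonneg_left (by positivity) (by positivity) hN.le
    _ = 8 * 2 ^ (k + m) * r / ρ := by
        field_simp; ring
end

section
/- Let 𝕊^n be the round unit sphere of ℝ^{n+1} with its geodesic distance and Riemannian volume measure vol. Let S ⊆ 𝕊^n be an open convex subset (i.e. the cone {t·s : t ≥ 0, s ∈ S} is convex in ℝ^{n+1}), let x ∈ S and r > 0. Then vol(S ∩ B(x,r))/vol(S) ≥ vol(B(x,r))/vol(𝕊^n), where B(x,r) is the geodesic ball of center x and radius r in 𝕊^n. -/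
/-!
`μ.toSphere A` is a multiple of the Lebesgue measure of the sector `(0, 1) • A`. Disintegrate
Lebesgue measure over the open half-planes `{u • ω + s • x | u > 0}`, `ω` a unit vector
orthogonal to `x`. Since the cone over `S` is convex and contains `x`, the trace of `S` on such a
half-plane is closed under decreasing the angle to `x`, and so is the trace of a ball centred
at `x`: the two traces are nested, whence `|B_ω| |S_ω| ≤ |(S ∩ B)_ω| |𝕊_ω|` for the slices of the
sectors. The slices of `B` and of the whole sphere do not depend on `ω`, so integrating over `ω`
gives `vol B · vol S ≤ vol (S ∩ B) · vol 𝕊ⁿ`. On `𝕊⁰ = {x, -x}` the sets `S` and `B` are nested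
outright.
-/

open Set MeasureTheory Metric

noncomputable section

/-- The Riemannian volume measure on the round sphere `𝕊^n` (normalization irrelevant
for ratios). -/
def sphereVolume (n : ℕ) : Measure (sphere (0 : EuclideanSpace ℝ (Fin (n + 1))) 1) :=
  (volume : Measure (EuclideanSpace ℝ (Fin (n + 1)))).toSphere

/-- The geodesic ball of center `x` and radius `r` in the round sphere `𝕊^n`. -/
def geoBall {n : ℕ} (x : sphere (0 : EuclideanSpace ℝ (Fin (n + 1))) 1) (r : ℝ) :
    Set (sphere (0 : EuclideanSpace ℝ (Fin (n + 1))) 1) :=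
  {y | Real.arccos
    (inner ℝ (x : EuclideanSpace ℝ (Fin (n + 1))) (y : EuclideanSpace ℝ (Fin (n + 1)))) ≤ r}

open scoped Pointwise RealInnerProductSpace ENNReal

theorem mul_le_mul_of_div_sqrt_le {u u₀ s s₀ : ℝ} (hu : 0 < u) (hu₀ : 0 < u₀)
    (h : s₀ / √(u₀ ^ 2 + s₀ ^ 2) ≤ s / √(u ^ 2 + s ^ 2)) : s₀ * u ≤ s * u₀ := by
  set a := √(u ^ 2 + s ^ 2)
  set b := √(u₀ ^ 2 + s₀ ^ 2)
  have ha : 0 < a := Real.sqrt_pos.2 (by positivity)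
  have hb : 0 < b := Real.sqrt_pos.2 (by positivity)
  have ha2 : a ^ 2 = u ^ 2 + s ^ 2 := Real.sq_sqrt (by positivity)
  have hb2 : b ^ 2 = u₀ ^ 2 + s₀ ^ 2 := Real.sq_sqrt (by positivity)
  have hcos : 0 ≤ s * b - s₀ * a := by
    rw [div_le_div_iff₀ hb ha] at h
    linarith
  have hcs : 0 ≤ a * b + s * s₀ + u * u₀ := by
    nlinarith [sq_nonneg (s * b + s₀ * a), sq_nonneg (u * b + u₀ * a), mul_pos ha hb]
  -- with `cos θ = s / a`, `sin θ = u / a` and likewise for `θ₀`, this is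
  -- `sin (θ₀ - θ) (sin θ + sin θ₀) = (cos θ - cos θ₀) (1 + cos (θ - θ₀))` scaled by `a² b²`
  have key : (s * u₀ - s₀ * u) * (u * b + u₀ * a) =
      (s * b - s₀ * a) * (a * b + s * s₀ + u * u₀) := by
    linear_combination (s₀ * b) * ha2 - (s * a) * hb2
  have hpos : 0 < u * b + u₀ * a := by positivity
  nlinarith [nonneg_of_mul_nonneg_left (key ▸ mul_nonneg hcos hcs) hpos]

theorem measure_mul_le_of_subset_or_subset {α : Type*} [MeasurableSpace α] (μ : Measure α)
    {s t u : Set α} (hs : s ⊆ u) (ht : t ⊆ u) (h : s ⊆ t ∨ t ⊆ s) :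
    μ t * μ s ≤ μ (s ∩ t) * μ u := by
  rcases h with hst | hts
  · rw [inter_eq_left.2 hst, mul_comm]
    gcongr
  · rw [inter_eq_right.2 hts]
    gcongr

theorem lintegral_mul_lintegral_le_of_mul_le {α : Type*} [MeasurableSpace α] {μ : Measure α}
    {f g f' g' : α → ℝ≥0∞} (hf : AEMeasurable f μ) (hg : AEMeasurable g μ)
    (hf' : AEMeasurable f' μ) (hg' : AEMeasurable g' μ) (h : ∀ a b, f a * g b ≤ f' a * g' b) :
    (∫⁻ a, f a ∂μ) * ∫⁻ b, g b ∂μ ≤ (∫⁻ a, f' a ∂μ) * ∫⁻ b, g' b ∂μ := by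
  rw [← lintegral_lintegral_mul hf hg, ← lintegral_lintegral_mul hf' hg']
  exact lintegral_mono fun a ↦ lintegral_mono fun b ↦ h a b

theorem ENNReal.div_le_div_of_mul_le_mul {a b c d : ℝ≥0∞} (hd : d ≠ 0) (hd' : d ≠ ∞)
    (h : a * d ≤ b * c) : a / c ≤ b / d := by
  rw [ENNReal.le_div_iff_mul_le (Or.inl hd) (Or.inl hd'), div_eq_mul_inv, mul_right_comm,
    ← div_eq_mul_inv]
  exact ENNReal.div_le_of_le_mul h

theorem MeasureTheory.Measure.measurePreserving_smul_toSphere_prod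
    {F : Type*} [NormedAddCommGroup F] [NormedSpace ℝ F] [FiniteDimensional ℝ F]
    [MeasurableSpace F] [BorelSpace F] [Nontrivial F] (μ : Measure F) [μ.IsAddHaarMeasure] :
    MeasurePreserving (fun p : sphere (0 : F) 1 × Ioi (0 : ℝ) ↦ (p.2 : ℝ) • (p.1 : F))
      (μ.toSphere.prod (volumeIoiPow (Module.finrank ℝ F - 1))) μ := by
  have hval := measurePreserving_subtype_coe (μa := μ) (measurableSet_singleton (0 : F)).compl
  rw [restrict_compl_singleton] at hval
  exact hval.comp (μ.measurePreserving_homeomorphUnitSphereProd.symm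
    (homeomorphUnitSphereProd F).toMeasurableEquiv)

section SphereGeometry

variable {E : Type*} [NormedAddCommGroup E] [InnerProductSpace ℝ E]

def sphereCone (A : Set (sphere (0 : E) 1)) : Set E :=
  {p | ∃ t : ℝ, 0 ≤ t ∧ ∃ s ∈ A, p = t • (s : E)}

def sector (A : Set (sphere (0 : E) 1)) : Set E :=
  Ioo (0 : ℝ) 1 • ((↑) '' A)

/-- `C` is a (closed or open) spherical cap centred at `x`, or empty, or the whole sphere. -/
def IsCap (x : E) (C : Set (sphere (0 : E) 1)) : Prop :=
  ∀ ⦃y y' : sphere (0 : E) 1⦄, ⟪x, y⟫ ≤ ⟪x, y'⟫ → y ∈ C → y' ∈ C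

def halfPlane (x z : E) (p : Ioi (0 : ℝ) × ℝ) : E :=
  (p.1 : ℝ) • z + p.2 • x

variable {A : Set (sphere (0 : E) 1)} {v : E}

theorem mem_sphereCone_iff (hv : v ≠ 0) : v ∈ sphereCone A ↔ ‖v‖⁻¹ • v ∈ (↑) '' A := by
  constructor
  · rintro ⟨t, ht, y, hy, rfl⟩
    have ht0 : t ≠ 0 := by rintro rfl; simp at hv
    simpa [norm_smul, abs_of_nonneg ht, smul_smul, ht0] using mem_image_of_mem Subtype.val hy
  · rintro ⟨y, hy, hyv⟩
    refine ⟨‖v‖, norm_nonneg v, y, hy, ?_⟩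
    rw [hyv, smul_smul, mul_inv_cancel₀ (norm_ne_zero_iff.2 hv), one_smul]

theorem coe_mem_sphereCone {y : sphere (0 : E) 1} (hy : y ∈ A) : (y : E) ∈ sphereCone A :=
  ⟨1, zero_le_one, y, hy, (one_smul ℝ _).symm⟩

theorem smul_mem_sphereCone {t : ℝ} (ht : 0 ≤ t) (hv : v ∈ sphereCone A) :
    t • v ∈ sphereCone A := by
  obtain ⟨c, hc, y, hy, rfl⟩ := hv
  exact ⟨t * c, mul_nonneg ht hc, y, hy, smul_smul t c _⟩

theorem add_mem_sphereCone (hA : Convex ℝ (sphereCone A)) {w : E} (hv : v ∈ sphereCone A)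
    (hw : w ∈ sphereCone A) : v + w ∈ sphereCone A := by
  have := smul_mem_sphereCone zero_le_two
    (hA hv hw (by norm_num : (0 : ℝ) ≤ 1 / 2) (by norm_num : (0 : ℝ) ≤ 1 / 2) (by norm_num))
  rwa [smul_add, smul_smul, smul_smul, mul_one_div_cancel two_ne_zero, one_smul, one_smul] at this

theorem mem_sector_iff : v ∈ sector A ↔ ‖v‖ ∈ Ioo (0 : ℝ) 1 ∧ ‖v‖⁻¹ • v ∈ (↑) '' A := by
  constructor
  · rintro ⟨t, ht, _, ⟨y, hy, rfl⟩, rfl⟩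
    have hnorm : ‖t • (y : E)‖ = t := by simp [norm_smul, abs_of_pos ht.1]
    rw [hnorm, smul_smul, inv_mul_cancel₀ ht.1.ne', one_smul]
    exact ⟨ht, mem_image_of_mem _ hy⟩
  · rintro ⟨hv, hvA⟩
    refine ⟨‖v‖, hv, _, hvA, ?_⟩
    simp [smul_smul, hv.1.ne']

theorem mem_sector_iff_mem_sphereCone (hv : v ≠ 0) :
    v ∈ sector A ↔ ‖v‖ < 1 ∧ v ∈ sphereCone A := by
  rw [mem_sector_iff, mem_sphereCone_iff hv]
  simp [hv]

theorem sector_mono {B : Set (sphere (0 : E) 1)} (h : A ⊆ B) : sector A ⊆ sector B :=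
  smul_subset_smul_left (image_mono h)

theorem sector_inter (A B : Set (sphere (0 : E) 1)) :
    sector (A ∩ B) = sector A ∩ sector B := by
  ext v
  simp only [mem_inter_iff, mem_sector_iff, image_inter Subtype.val_injective]
  tauto

theorem measurableSet_sector [MeasurableSpace E] [BorelSpace E] (hA : MeasurableSet A) :
    MeasurableSet (sector A) := by
  have : sector A = norm ⁻¹' Ioo 0 1 ∩ (fun v : E ↦ ‖v‖⁻¹ • v) ⁻¹' ((↑) '' A) := by
    ext v
    exact mem_sector_iff
  rw [this]
  exact (measurable_norm measurableSet_Ioo).inter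
    ((measurable_norm.inv.smul measurable_id)
      ((MeasurableEmbedding.subtype_coe isClosed_sphere.measurableSet).measurableSet_image.2 hA))

theorem halfPlane_mem_sphereCone (hA : Convex ℝ (sphereCone A)) {x z : E}
    (hx : x ∈ sphereCone A) {p₀ p : Ioi (0 : ℝ) × ℝ} (hp₀ : halfPlane x z p₀ ∈ sphereCone A)
    (h : p₀.2 * p.1 ≤ p.2 * p₀.1) : halfPlane x z p ∈ sphereCone A := by
  obtain ⟨⟨u₀, hu₀⟩, s₀⟩ := p₀
  obtain ⟨⟨u, hu⟩, s⟩ := p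
  have hu₀ : 0 < u₀ := hu₀
  have hcomb : halfPlane x z (⟨u, hu⟩, s) =
      ((s * u₀ - s₀ * u) / u₀) • x + (u / u₀) • halfPlane x z (⟨u₀, hu₀⟩, s₀) := by
    simp only [halfPlane]
    match_scalars
    · field_simp
    · field_simp
      ring
  rw [hcomb]
  exact add_mem_sphereCone hA
    (smul_mem_sphereCone (div_nonneg (by linarith [h]) hu₀.le) hx)
    (smul_mem_sphereCone (div_nonneg hu.le hu₀.le) hp₀)

theorem IsCap.mem_sphereCone {x : E} {C : Set (sphere (0 : E) 1)} (hC : IsCap x C) {v w : E}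
    (hv : v ≠ 0) (hw : w ≠ 0) (hvC : v ∈ sphereCone C) (h : ⟪x, v⟫ / ‖v‖ ≤ ⟪x, w⟫ / ‖w‖) :
    w ∈ sphereCone C := by
  obtain ⟨y, hy, hyv⟩ := (mem_sphereCone_iff hv).1 hvC
  refine (mem_sphereCone_iff hw).2
    ⟨⟨‖w‖⁻¹ • w, mem_sphere_zero_iff_norm.2 (norm_smul_inv_norm (𝕜 := ℝ) hw)⟩, hC ?_ hy, rfl⟩
  rw [hyv]
  simpa [real_inner_smul_right, inv_mul_eq_div] using h

theorem IsCap.measurableSet [MeasurableSpace E] [OpensMeasurableSpace E] {x : E}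
    {C : Set (sphere (0 : E) 1)} (hC : IsCap x C) : MeasurableSet C := by
  have hCeq : C = (fun y : sphere (0 : E) 1 ↦ ⟪x, y⟫) ⁻¹'
      upperClosure ((fun y : sphere (0 : E) 1 ↦ ⟪x, y⟫) '' C) := by
    ext y
    refine ⟨fun hy ↦ ⟨_, mem_image_of_mem _ hy, le_rfl⟩, ?_⟩
    rintro ⟨_, ⟨y₀, hy₀, rfl⟩, hle⟩
    exact hC hle hy₀
  rw [hCeq]
  exact (continuous_const.inner continuous_subtype_val).measurable
    (upperClosure _).upper.ordConnected.measurableSet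

theorem isCap_univ (x : E) : IsCap x (univ : Set (sphere (0 : E) 1)) := fun _ _ _ _ ↦ trivial

theorem eq_or_inner_eq_neg_one_of_subsingleton_orthogonal
    {x : sphere (0 : E) 1} (hK : Subsingleton (ℝ ∙ (x : E))ᗮ) (y : sphere (0 : E) 1) :
    y = x ∨ ⟪(x : E), y⟫ = -1 := by
  have hspan : (ℝ ∙ (x : E)) = ⊤ :=
    Submodule.orthogonal_eq_bot_iff.1 Submodule.eq_bot_of_subsingleton
  obtain ⟨c, hc⟩ := Submodule.mem_span_singleton.1 (hspan ▸ Submodule.mem_top : (y : E) ∈ _)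
  have hc1 : |c| = 1 := by
    simpa [← hc, norm_smul, norm_eq_of_mem_sphere] using norm_eq_of_mem_sphere y
  rcases (abs_eq zero_le_one).1 hc1 with rfl | rfl
  · exact Or.inl (Subtype.ext (by simpa using hc.symm))
  · right
    rw [← hc, real_inner_smul_right, real_inner_self_eq_norm_sq, norm_eq_of_mem_sphere]
    norm_num

theorem IsCap.subset_or_subset {x : sphere (0 : E) 1} {S C : Set (sphere (0 : E) 1)}
    (hC : IsCap (x : E) C) (hxS : x ∈ S)
    (hsphere : ∀ y : sphere (0 : E) 1, y = x ∨ ⟪(x : E), y⟫ = -1) : S ⊆ C ∨ C ⊆ S := by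
  refine or_iff_not_imp_left.2 fun hSC w hwC ↦ ?_
  obtain ⟨y, -, hyC⟩ := not_subset.1 hSC
  rcases hsphere w with rfl | hw
  · exact hxS
  · refine absurd (hC ?_ hwC) hyC
    rw [hw]
    exact neg_one_le_real_inner_of_norm_eq_one (norm_eq_of_mem_sphere x) (norm_eq_of_mem_sphere y)

section Orthonormal

variable {x z : E} (hx : ‖x‖ = 1) (hz : ‖z‖ = 1) (hxz : ⟪x, z⟫ = 0)
include hx hz hxz

theorem norm_halfPlane (p : Ioi (0 : ℝ) × ℝ) :
    ‖halfPlane x z p‖ = √((p.1 : ℝ) ^ 2 + p.2 ^ 2) := by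
  rw [← Real.sqrt_sq (norm_nonneg _), halfPlane, norm_add_sq_real, real_inner_smul_left,
    real_inner_smul_right, real_inner_comm, hxz, norm_smul, norm_smul, hx, hz]
  simp

theorem halfPlane_ne_zero (p : Ioi (0 : ℝ) × ℝ) : halfPlane x z p ≠ 0 := by
  rw [← norm_ne_zero_iff, norm_halfPlane hx hz hxz]
  have := p.1.2.out
  positivity

theorem inner_div_norm_halfPlane (p : Ioi (0 : ℝ) × ℝ) :
    ⟪x, halfPlane x z p⟫ / ‖halfPlane x z p‖ = p.2 / √((p.1 : ℝ) ^ 2 + p.2 ^ 2) := by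
  rw [norm_halfPlane hx hz hxz, halfPlane, inner_add_right, real_inner_smul_right,
    real_inner_smul_right, hxz, real_inner_self_eq_norm_sq, hx]
  simp

theorem halfPlane_preimage_sector_subset_or_subset {S C : Set (sphere (0 : E) 1)}
    (hS : Convex ℝ (sphereCone S)) (hxS : x ∈ sphereCone S) (hC : IsCap x C) :
    halfPlane x z ⁻¹' sector S ⊆ halfPlane x z ⁻¹' sector C ∨
      halfPlane x z ⁻¹' sector C ⊆ halfPlane x z ⁻¹' sector S := by
  refine or_iff_not_imp_left.2 fun hSC ↦ ?_
  obtain ⟨p₀, hp₀S, hp₀C⟩ := not_subset.1 hSC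
  intro p hpC
  simp only [mem_preimage, mem_sector_iff_mem_sphereCone (halfPlane_ne_zero hx hz hxz _)]
    at hp₀S hp₀C hpC ⊢
  refine ⟨hpC.1, halfPlane_mem_sphereCone hS hxS hp₀S.2 ?_⟩
  refine mul_le_mul_of_div_sqrt_le p.1.2 p₀.1.2 ?_
  rw [← inner_div_norm_halfPlane hx hz hxz, ← inner_div_norm_halfPlane hx hz hxz]
  by_contra! hlt
  exact hp₀C ⟨hp₀S.1, hC.mem_sphereCone (halfPlane_ne_zero hx hz hxz _)
    (halfPlane_ne_zero hx hz hxz _) hpC.2 hlt.le⟩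

end Orthonormal

theorem IsCap.halfPlane_preimage_sector_subset {x z z' : E} {C : Set (sphere (0 : E) 1)}
    (hC : IsCap x C) (hx : ‖x‖ = 1) (hz : ‖z‖ = 1) (hxz : ⟪x, z⟫ = 0) (hz' : ‖z'‖ = 1)
    (hxz' : ⟪x, z'⟫ = 0) : halfPlane x z ⁻¹' sector C ⊆ halfPlane x z' ⁻¹' sector C := by
  intro p hp
  simp only [mem_preimage, mem_sector_iff_mem_sphereCone (halfPlane_ne_zero hx hz hxz _),
    mem_sector_iff_mem_sphereCone (halfPlane_ne_zero hx hz' hxz' _)] at hp ⊢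
  refine ⟨by rw [norm_halfPlane hx hz' hxz', ← norm_halfPlane hx hz hxz]; exact hp.1, ?_⟩
  refine hC.mem_sphereCone (halfPlane_ne_zero hx hz hxz _) (halfPlane_ne_zero hx hz' hxz' _) hp.2
    (le_of_eq ?_)
  rw [inner_div_norm_halfPlane hx hz hxz, inner_div_norm_halfPlane hx hz' hxz']

theorem IsCap.halfPlane_preimage_sector_eq {x z z' : E} {C : Set (sphere (0 : E) 1)}
    (hC : IsCap x C) (hx : ‖x‖ = 1) (hz : ‖z‖ = 1) (hxz : ⟪x, z⟫ = 0) (hz' : ‖z'‖ = 1)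
    (hxz' : ⟪x, z'⟫ = 0) : halfPlane x z ⁻¹' sector C = halfPlane x z' ⁻¹' sector C :=
  (hC.halfPlane_preimage_sector_subset hx hz hxz hz' hxz').antisymm
    (hC.halfPlane_preimage_sector_subset hx hz' hxz' hz hxz)

end SphereGeometry

section HalfPlaneCoordinates

variable {E : Type*} [NormedAddCommGroup E] [InnerProductSpace ℝ E] [FiniteDimensional ℝ E]
  [MeasurableSpace E] [BorelSpace E] {x : E}

theorem measurePreserving_add_smul_orthogonal (hx : ‖x‖ = 1) :
    MeasurePreserving (fun p : (ℝ ∙ x)ᗮ × ℝ ↦ (p.1 : E) + p.2 • x) := by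
  let φ : WithLp 2 (ℝ × (ℝ ∙ x)ᗮ) ≃ₗᵢ[ℝ] E :=
    (LinearIsometryEquiv.withLpProdCongr 2 (LinearIsometryEquiv.toSpanUnitSingleton x hx)
      (LinearIsometryEquiv.refl ℝ _)).trans (ℝ ∙ x).orthogonalDecomposition.symm
  have := (φ.measurePreserving.comp (WithLp.volume_preserving_toLp ℝ (ℝ ∙ x)ᗮ)).comp
    (Measure.measurePreserving_swap (μ := volume) (ν := volume))
  convert this using 1
  · ext p
    simp [φ, add_comm]
  · exact Measure.volume_eq_prod _ _

variable (hx : ‖x‖ = 1) [Nontrivial (ℝ ∙ x)ᗮ]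
include hx

theorem measurePreserving_halfPlane :
    MeasurePreserving
      (fun q : sphere (0 : (ℝ ∙ x)ᗮ) 1 × (Ioi (0 : ℝ) × ℝ) ↦ halfPlane x (q.1 : (ℝ ∙ x)ᗮ) q.2)
      ((volume : Measure (ℝ ∙ x)ᗮ).toSphere.prod
        ((Measure.volumeIoiPow (Module.finrank ℝ (ℝ ∙ x)ᗮ - 1)).prod volume)) :=
  ((measurePreserving_add_smul_orthogonal hx).comp
    ((Measure.measurePreserving_smul_toSphere_prod volume).prod (MeasurePreserving.id volume))).comp
    ((measurePreserving_prodAssoc _ _ _).symm MeasurableEquiv.prodAssoc)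

theorem volume_eq_lintegral_halfPlane_preimage {T : Set E} (hT : MeasurableSet T) :
    volume T = ∫⁻ ω : sphere (0 : (ℝ ∙ x)ᗮ) 1,
      (Measure.volumeIoiPow (Module.finrank ℝ (ℝ ∙ x)ᗮ - 1)).prod volume
        (halfPlane x (ω : (ℝ ∙ x)ᗮ) ⁻¹' T) ∂(volume : Measure (ℝ ∙ x)ᗮ).toSphere := by
  rw [← (measurePreserving_halfPlane hx).measure_preimage hT.nullMeasurableSet,
    Measure.prod_apply ((measurePreserving_halfPlane hx).measurable hT)]
  rfl

theorem measurable_measure_halfPlane_preimage {T : Set E} (hT : MeasurableSet T) :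
    Measurable fun ω : sphere (0 : (ℝ ∙ x)ᗮ) 1 ↦
      (Measure.volumeIoiPow (Module.finrank ℝ (ℝ ∙ x)ᗮ - 1)).prod volume
        (halfPlane x (ω : (ℝ ∙ x)ᗮ) ⁻¹' T) :=
  measurable_measure_prodMk_left ((measurePreserving_halfPlane hx).measurable hT)

end HalfPlaneCoordinates

section CapInequality

variable {E : Type*} [NormedAddCommGroup E] [InnerProductSpace ℝ E] [FiniteDimensional ℝ E]
  [MeasurableSpace E] [BorelSpace E] {x : sphere (0 : E) 1} {S C : Set (sphere (0 : E) 1)}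

theorem volume_sector_mul_le [Nontrivial (ℝ ∙ (x : E))ᗮ] (hS : MeasurableSet S)
    (hSconv : Convex ℝ (sphereCone S)) (hxS : x ∈ S) (hC : IsCap (x : E) C) :
    volume (sector C) * volume (sector S) ≤
      volume (sector (S ∩ C)) * volume (sector (univ : Set (sphere (0 : E) 1))) := by
  have hx : ‖(x : E)‖ = 1 := norm_eq_of_mem_sphere x
  set σ := (volume : Measure (ℝ ∙ (x : E))ᗮ).toSphere
  set μ₂ := (Measure.volumeIoiPow (Module.finrank ℝ (ℝ ∙ (x : E))ᗮ - 1)).prod (volume : Measure ℝ)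
  set f : Set (sphere (0 : E) 1) → sphere (0 : (ℝ ∙ (x : E))ᗮ) 1 → ℝ≥0∞ :=
    fun A ω ↦ μ₂ (halfPlane (x : E) (ω : (ℝ ∙ (x : E))ᗮ) ⁻¹' sector A)
  have hω (ω : sphere (0 : (ℝ ∙ (x : E))ᗮ) 1) :
      ‖((ω : (ℝ ∙ (x : E))ᗮ) : E)‖ = 1 ∧ ⟪(x : E), ω⟫ = 0 :=
    ⟨norm_eq_of_mem_sphere ω,
      Submodule.mem_orthogonal_singleton_iff_inner_right.1 (ω : (ℝ ∙ (x : E))ᗮ).2⟩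
  have hvol {A} (hA : MeasurableSet A) : volume (sector A) = ∫⁻ ω, f A ω ∂σ :=
    volume_eq_lintegral_halfPlane_preimage hx (measurableSet_sector hA)
  have hf {A} (hA : MeasurableSet A) : AEMeasurable (f A) σ :=
    (measurable_measure_halfPlane_preimage hx (measurableSet_sector hA)).aemeasurable
  have hcross (ω ω') : f C ω * f S ω' ≤ f univ ω * f (S ∩ C) ω' := by
    simp only [f, hC.halfPlane_preimage_sector_eq hx (hω ω).1 (hω ω).2 (hω ω').1 (hω ω').2,
      (isCap_univ _).halfPlane_preimage_sector_eq hx (hω ω).1 (hω ω).2 (hω ω').1 (hω ω').2,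
      sector_inter, preimage_inter, mul_comm (μ₂ (halfPlane (x : E) _ ⁻¹' sector univ))]
    exact measure_mul_le_of_subset_or_subset μ₂ (preimage_mono (sector_mono (subset_univ S)))
      (preimage_mono (sector_mono (subset_univ C)))
      (halfPlane_preimage_sector_subset_or_subset hx (hω ω').1 (hω ω').2 hSconv
        (coe_mem_sphereCone hxS) hC)
  have hCm := hC.measurableSet
  rw [hvol hCm, hvol hS, hvol (hS.inter hCm), hvol MeasurableSet.univ,
    mul_comm (∫⁻ ω, f (S ∩ C) ω ∂σ)]
  exact lintegral_mul_lintegral_le_of_mul_le (hf hCm) (hf hS) (hf .univ) (hf (hS.inter hCm))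
    hcross

theorem toSphere_mul_le_of_isCap (hS : MeasurableSet S) (hSconv : Convex ℝ (sphereCone S))
    (hxS : x ∈ S) (hC : IsCap (x : E) C) :
    (volume : Measure E).toSphere C * (volume : Measure E).toSphere S ≤
      (volume : Measure E).toSphere (S ∩ C) * (volume : Measure E).toSphere univ := by
  rcases subsingleton_or_nontrivial (ℝ ∙ (x : E))ᗮ with hK | hK
  · exact measure_mul_le_of_subset_or_subset _ (subset_univ S) (subset_univ C)
      (hC.subset_or_subset hxS (eq_or_inner_eq_neg_one_of_subsingleton_orthogonal hK))
  · have hCm := hC.measurableSet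
    rw [Measure.toSphere_apply' _ hCm, Measure.toSphere_apply' _ hS,
      Measure.toSphere_apply' _ (hS.inter hCm), Measure.toSphere_apply' _ .univ,
      mul_mul_mul_comm, mul_mul_mul_comm _ ((volume : Measure E) _)]
    gcongr _ * ?_
    exact volume_sector_mul_le hS hSconv hxS hC

end CapInequality

theorem isCap_geoBall {n : ℕ} (x : sphere (0 : EuclideanSpace ℝ (Fin (n + 1))) 1) (r : ℝ) :
    IsCap (x : EuclideanSpace ℝ (Fin (n + 1))) (geoBall x r) :=
  fun _ _ h hy ↦ (Real.arccos_le_arccos h).trans hy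

theorem bishop_gromov_sphere_convex_general
    (n : ℕ)
    (S : Set (sphere (0 : EuclideanSpace ℝ (Fin (n + 1))) 1))
    (hS_open : IsOpen S)
    (hS_conv : Convex ℝ {p : EuclideanSpace ℝ (Fin (n + 1)) |
      ∃ t : ℝ, 0 ≤ t ∧ ∃ s ∈ S, p = t • (s : EuclideanSpace ℝ (Fin (n + 1)))})
    (x : sphere (0 : EuclideanSpace ℝ (Fin (n + 1))) 1) (hx : x ∈ S)
    (r : ℝ) :
    sphereVolume n (geoBall x r) / sphereVolume n univ ≤
      sphereVolume n (S ∩ geoBall x r) / sphereVolume n S := by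
  unfold sphereVolume
  exact ENNReal.div_le_div_of_mul_le_mul (hS_open.measure_ne_zero _ ⟨x, hx⟩) (measure_ne_top _ _)
    (toSphere_mul_le_of_isCap hS_open.measurableSet hS_conv hx (isCap_geoBall x r))

/-- Bishop–Gromov type inequality on the round sphere: for every open convex subset
`S ⊆ 𝕊^n` (i.e. the cone over `S` is convex in `ℝ^{n+1}`), every `x ∈ S` and `r > 0`,
`vol(S ∩ B(x,r))/vol(S) ≥ vol(B(x,r))/vol(𝕊^n)`. -/
theorem bishop_gromov_sphere_convex
    (n : ℕ)
    (S : Set (sphere (0 : EuclideanSpace ℝ (Fin (n + 1))) 1))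
    (hS_open : IsOpen S)
    (hS_conv : Convex ℝ {p : EuclideanSpace ℝ (Fin (n + 1)) |
      ∃ t : ℝ, 0 ≤ t ∧ ∃ s ∈ S, p = t • (s : EuclideanSpace ℝ (Fin (n + 1)))})
    (x : sphere (0 : EuclideanSpace ℝ (Fin (n + 1))) 1) (hx : x ∈ S)
    (r : ℝ) (hr : 0 < r) :
    sphereVolume n (geoBall x r) / sphereVolume n univ ≤
      sphereVolume n (S ∩ geoBall x r) / sphereVolume n S :=
  bishop_gromov_sphere_convex_general n S hS_open hS_conv x hx r
end
end

section
/- Let N be a norm on ℝ^d which is C²-smooth and strongly convex, i.e. N is twice continuously differentiable on ℝ^d ∖ {0} and the Hessian quadratic form of x ↦ N(x)² is positive definite at every x ≠ 0. Then there exists r₀ > 0 such that for every r with 0 < r < r₀, every 2-dimensional linear subspace P of ℝ^d, and every x with N(x) = 1, the set {z ∈ P : N(z) = 1 and N(z − x) = r} is finite. -/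
/-!
Write `f = N²`. If the set were infinite it would accumulate at some `z₀`, and a nonzero tangent
direction `u ∈ P` of the set at `z₀` is killed both by `f'(z₀)` and by `f'(z₀ - x)`. Since
`f'(z₀) z₀ = 2` (Euler), the two differentials are proportional on `P`, say
`f'(z₀ - x) = c f'(z₀)` there, and the dual-norm bound `|f'(y) v| ≤ 2 N(y) N(v)` gives `|c| ≤ r`.
For a point `w ≠ z₀` of the set close to `z₀`, the function
`φ(s) = f(z₀ - x + s (w - z₀)) - c f(z₀ + s (w - z₀))` satisfies `φ(0) = φ(1)` and `φ'(0) = 0`,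
while `φ'' ≥ (m - |c| M) ‖w - z₀‖² > 0`, where `m ≤ f'' ≤ M` on unit vectors: these bounds are
uniform because the Hessian of the `2`-homogeneous `f` is `0`-homogeneous. So `r₀ = m / M` works.
-/

open Set Filter Topology

section Homogeneous

variable {𝕜 E F : Type*} [NontriviallyNormedField 𝕜] [NormedAddCommGroup E] [NormedSpace 𝕜 E]
  [NormedAddCommGroup F] [NormedSpace 𝕜 F]

theorem fderiv_smul_of_homogeneous {f : E → F} {c : 𝕜} (hc : c ≠ 0) {k : ℕ}
    (hf : ∀ x, f (c • x) = c ^ (k + 1) • f x) (x : E) :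
    fderiv 𝕜 f (c • x) = c ^ k • fderiv 𝕜 f x := by
  have h := fderiv_comp_smul (f := f) (x := x) c
  rw [show (f <| c • ·) = c ^ (k + 1) • f from funext hf, fderiv_const_smul_field, pow_succ',
    mul_smul] at h
  exact (smul_right_injective _ hc h).symm

theorem fderiv_fderiv_smul_of_homogeneous {f : E → F} {c : 𝕜} (hc : c ≠ 0)
    (hf : ∀ x, f (c • x) = c ^ 2 • f x) (x : E) :
    fderiv 𝕜 (fderiv 𝕜 f) (c • x) = fderiv 𝕜 (fderiv 𝕜 f) x := by
  simpa using fderiv_smul_of_homogeneous (f := fderiv 𝕜 f) hc (k := 0)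
    (fun y => by simpa using fderiv_smul_of_homogeneous hc (k := 1) hf y) x

end Homogeneous

section Line

variable {E F : Type*} [NormedAddCommGroup E] [NormedSpace ℝ E]
  [NormedAddCommGroup F] [NormedSpace ℝ F] {x v : E} {t : ℝ}

theorem hasDerivAt_comp_add_smul {f : E → F} (hf : DifferentiableAt ℝ f (x + t • v)) :
    HasDerivAt (fun s : ℝ => f (x + s • v)) (fderiv ℝ f (x + t • v) v) t := by
  simpa [Function.comp_def] using
    hf.hasFDerivAt.comp_hasDerivAt t (((hasDerivAt_id t).smul_const v).const_add x)

theorem hasDerivAt_fderiv_comp_add_smul {f : E → F}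
    (hf : DifferentiableAt ℝ (fderiv ℝ f) (x + t • v)) :
    HasDerivAt (fun s : ℝ => fderiv ℝ f (x + s • v) v)
      (fderiv ℝ (fderiv ℝ f) (x + t • v) v v) t := by
  simpa using (hasDerivAt_comp_add_smul hf).clm_apply (hasDerivAt_const t v)

theorem iteratedDeriv_two_comp_add_smul {f : E → F} (hf : ContDiffAt ℝ 2 f x) :
    iteratedDeriv 2 (fun t : ℝ => f (x + t • v)) 0 = fderiv ℝ (fderiv ℝ f) x v v := by
  have hline : Tendsto (fun t : ℝ => x + t • v) (𝓝 0) (𝓝 x) :=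
    (by fun_prop : Continuous fun t : ℝ => x + t • v).tendsto' 0 x (by simp)
  have hderiv : deriv (fun t : ℝ => f (x + t • v)) =ᶠ[𝓝 0]
      fun t => fderiv ℝ f (x + t • v) v := by
    filter_upwards [hline.eventually (hf.eventually (by simp))] with t ht
    exact (hasDerivAt_comp_add_smul (ht.differentiableAt (by norm_num))).deriv
  rw [show (2 : ℕ) = 1 + 1 from rfl, iteratedDeriv_succ, iteratedDeriv_one, hderiv.deriv_eq]
  simpa using (hasDerivAt_fderiv_comp_add_smul (t := 0) (v := v)
    (by simpa using (hf.fderiv_right (m := 1) (by norm_num)).differentiableAt one_ne_zero)).deriv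

theorem fderiv_apply_self_of_homogeneous {f : E → ℝ} (hf : DifferentiableAt ℝ f x) {k : ℕ}
    (hhom : ∀ t : ℝ, f (t • x) = t ^ k * f x) : fderiv ℝ f x x = k * f x := by
  have h1 : HasDerivAt (fun t : ℝ => f (t • x)) (fderiv ℝ f x x) 1 := by
    simpa using hasDerivAt_comp_add_smul (x := 0) (v := x) (t := 1) (by simpa using hf)
  have h2 : HasDerivAt (fun t : ℝ => t ^ k * f x) (k * f x) 1 := by
    simpa using (hasDerivAt_pow k (1 : ℝ)).mul_const (f x)
  exact h1.unique (by simpa only [hhom] using h2)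

end Line

theorem exists_hessian_bounds {E : Type*} [NormedAddCommGroup E] [NormedSpace ℝ E]
    [FiniteDimensional ℝ E] {f : E → ℝ} (hf : ContDiffOn ℝ 2 f {0}ᶜ)
    (hhom : ∀ (c : ℝ) x, f (c • x) = c ^ 2 * f x)
    (hpos : ∀ x ≠ 0, ∀ v ≠ 0, 0 < fderiv ℝ (fderiv ℝ f) x v v) :
    ∃ m M : ℝ, 0 < m ∧ 0 < M ∧ ∀ x ≠ 0, ∀ v, m * ‖v‖ ^ 2 ≤ fderiv ℝ (fderiv ℝ f) x v v ∧
      fderiv ℝ (fderiv ℝ f) x v v ≤ M * ‖v‖ ^ 2 := by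
  set K := Metric.sphere (0 : E) 1 ×ˢ Metric.sphere (0 : E) 1
  have hK : IsCompact K := (isCompact_sphere 0 1).prod (isCompact_sphere 0 1)
  have hcont : ContinuousOn (fun q : E × E => fderiv ℝ (fderiv ℝ f) q.1 q.2 q.2) K := by
    have h2 : ContinuousOn (fderiv ℝ (fderiv ℝ f)) {0}ᶜ :=
      (hf.fderiv_of_isOpen isOpen_compl_singleton (by norm_num)).continuousOn_fderiv_of_isOpen
        isOpen_compl_singleton le_rfl
    refine ((h2.comp continuousOn_fst ?_).clm_apply continuousOn_snd).clm_apply continuousOn_snd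
    rintro q ⟨hq, -⟩
    exact ne_zero_of_mem_unit_sphere ⟨q.1, hq⟩
  obtain ⟨m, hm, hmK⟩ := hK.exists_forall_le' hcont fun q ⟨h1, h2⟩ =>
    hpos _ (ne_zero_of_mem_unit_sphere ⟨_, h1⟩) _ (ne_zero_of_mem_unit_sphere ⟨_, h2⟩)
  obtain ⟨C, hC⟩ := hK.exists_bound_of_continuousOn hcont
  refine ⟨m, max C 1, hm, by positivity, fun x hx v => ?_⟩
  rcases eq_or_ne v 0 with rfl | hv
  · simp
  have hq : (‖x‖⁻¹ • x, ‖v‖⁻¹ • v) ∈ K := by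
    constructor <;> simp [norm_smul, hx, hv]
  have hscale : fderiv ℝ (fderiv ℝ f) x v v =
      ‖v‖ ^ 2 * fderiv ℝ (fderiv ℝ f) (‖x‖⁻¹ • x) (‖v‖⁻¹ • v) (‖v‖⁻¹ • v) := by
    rw [fderiv_fderiv_smul_of_homogeneous (inv_ne_zero (norm_ne_zero_iff.2 hx))
      (fun y => by rw [smul_eq_mul]; exact hhom _ y)]
    simp only [map_smul, FunLike.coe_smul, Pi.smul_apply, smul_eq_mul]
    field_simp
  have hmq := hmK _ hq
  have hCq := (abs_le.1 (hC _ hq)).2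
  rw [hscale]
  constructor <;> nlinarith [le_max_left C 1, sq_nonneg ‖v‖]

namespace Seminorm

variable {E : Type*} [NormedAddCommGroup E] [NormedSpace ℝ E] (p : Seminorm ℝ E)

theorem continuous_of_finiteDimensional [FiniteDimensional ℝ E] : Continuous p :=
  p.convexOn.locallyLipschitz.continuous

theorem exists_pos_mul_norm_le [FiniteDimensional ℝ E] (hp : ∀ x, p x = 0 → x = 0) :
    ∃ c > 0, ∀ x, c * ‖x‖ ≤ p x := by
  obtain ⟨c, hc, hcp⟩ := (isCompact_sphere (0 : E) 1).exists_forall_le'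
    p.continuous_of_finiteDimensional.continuousOn (a := 0) fun x hx =>
      (apply_nonneg p x).lt_of_ne' fun h => ne_zero_of_mem_unit_sphere ⟨x, hx⟩ (hp x h)
  refine ⟨c, hc, fun x => ?_⟩
  rcases eq_or_ne x 0 with rfl | hx
  · simp
  have hx' : 0 < ‖x‖ := norm_pos_iff.2 hx
  have := hcp (‖x‖⁻¹ • x) (by simp [norm_smul, hx])
  rw [map_smul_eq_mul, norm_inv, norm_norm] at this
  rwa [le_inv_mul_iff₀ hx', mul_comm] at this

theorem isCompact_setOf_eq [FiniteDimensional ℝ E] (hp : ∀ x, p x = 0 → x = 0) (r : ℝ) :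
    IsCompact {x | p x = r} := by
  obtain ⟨c, hc, hcp⟩ := p.exists_pos_mul_norm_le hp
  refine Metric.isCompact_of_isClosed_isBounded
    (isClosed_eq p.continuous_of_finiteDimensional continuous_const) ?_
  refine isBounded_iff_forall_norm_le.2 ⟨r / c, fun x (hx : p x = r) => ?_⟩
  rw [le_div_iff₀ hc, mul_comm, ← hx]
  exact hcp x

theorem fderiv_sq_apply_le {y : E} (hy : DifferentiableAt ℝ (fun z => p z ^ 2) y) (v : E) :
    fderiv ℝ (fun z => p z ^ 2) y v ≤ 2 * p y * p v := by
  set φ : ℝ → ℝ := fun t => p (y + t • v) ^ 2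
  have hφ : HasDerivAt φ (fderiv ℝ (fun z => p z ^ 2) y v) 0 := by
    simpa using hasDerivAt_comp_add_smul (f := fun z => p z ^ 2) (t := 0) (by simpa using hy)
  have hslope := hφ.tendsto_slope_zero_right
  have hbound : Tendsto (fun t => 2 * p y * p v + t * p v ^ 2) (𝓝[>] 0) (𝓝 (2 * p y * p v)) := by
    refine tendsto_nhdsWithin_of_tendsto_nhds ((by fun_prop : Continuous _).tendsto' 0 _ ?_)
    simp
  refine le_of_tendsto_of_tendsto hslope hbound (eventually_nhdsWithin_of_forall fun t ht => ?_)
  have ht : (0 : ℝ) < t := ht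
  have htri : p (y + t • v) ≤ p y + t * p v := by
    simpa [map_smul_eq_mul, abs_of_pos ht] using map_add_le_add p y (t • v)
  simp only [φ, zero_add, zero_smul, add_zero, smul_eq_mul]
  rw [inv_mul_le_iff₀ ht]
  nlinarith [apply_nonneg p (y + t • v), apply_nonneg p y, apply_nonneg p v]

theorem abs_fderiv_sq_apply_le {y : E} (hy : DifferentiableAt ℝ (fun z => p z ^ 2) y) (v : E) :
    |fderiv ℝ (fun z => p z ^ 2) y v| ≤ 2 * p y * p v := by
  have := p.fderiv_sq_apply_le hy (-v)
  rw [map_neg, map_neg_eq_map] at this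
  exact abs_le.2 ⟨by linarith, p.fderiv_sq_apply_le hy v⟩

end Seminorm

section TangentCone

variable {𝕜 E F : Type*} [NontriviallyNormedField 𝕜] [NormedAddCommGroup E] [NormedSpace 𝕜 E]
  [NormedAddCommGroup F] [NormedSpace 𝕜 F]

theorem fderiv_apply_eq_zero_of_mem_tangentConeAt {f : E → F} {s : Set E} {x u : E}
    (hf : DifferentiableAt 𝕜 f x) (hs : ∀ y ∈ s, f y = f x) (hu : u ∈ tangentConeAt 𝕜 s x) :
    fderiv 𝕜 f x u = 0 :=
  hf.hasFDerivAt.hasFDerivWithinAt.unique_on ((hasFDerivWithinAt_const (f x) x s).congr hs rfl) hu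

theorem Submodule.tangentConeAt_subset {P : Submodule 𝕜 E} (hP : IsClosed (P : Set E)) {x : E}
    (hx : x ∈ P) : tangentConeAt 𝕜 (P : Set E) x ⊆ P := by
  intro u hu
  obtain ⟨_, _, _, _, _, -, hds, hcd⟩ := exists_fun_of_mem_tangentConeAt hu
  refine hP.mem_of_tendsto hcd (hds.mono fun n hn => P.smul_mem _ ?_)
  simpa using P.sub_mem hn hx

end TangentCone

theorem Submodule.mul_apply_eq_of_finrank_eq_two {K V : Type*} [Field K] [AddCommGroup V]
    [Module K V] {P : Submodule K V} (hP : Module.finrank K P = 2) {α β : V →ₗ[K] K} {u z : V}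
    (hu : u ∈ P) (hu0 : u ≠ 0) (hz : z ∈ P) (hαu : α u = 0) (hβu : β u = 0) (hαz : α z ≠ 0)
    {v : V} (hv : v ∈ P) : α z * β v = β z * α v := by
  have hind : LinearIndependent K ![u, z] := by
    rw [LinearIndependent.pair_iff]
    intro s t hst
    have ht : t = 0 := by simpa [hαu, hαz] using congrArg α hst
    subst ht
    simpa [hu0] using hst
  have hspan : Submodule.span K {u, z} = P := by
    have : FiniteDimensional K P := Module.finite_of_finrank_eq_succ hP
    refine Submodule.eq_of_le_of_finrank_le (Submodule.span_le.2 (pair_subset hu hz)) ?_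
    rw [hP, ← Matrix.range_cons_cons_empty, finrank_span_eq_card hind, Fintype.card_fin]
  obtain ⟨a, b, rfl⟩ := Submodule.mem_span_pair.1 (hspan ▸ hv)
  simp [hαu, hβu]
  ring

theorem mul_fderiv_eq_of_accPt {E : Type*} [NormedAddCommGroup E] [NormedSpace ℝ E]
    [FiniteDimensional ℝ E] {f g : E → ℝ} {P : Submodule ℝ E} (hP : Module.finrank ℝ P = 2)
    {Z : Set E} (hZP : Z ⊆ P) {z₀ : E} (hz₀ : z₀ ∈ P) (hacc : AccPt z₀ (𝓟 Z))
    (hf : DifferentiableAt ℝ f z₀) (hg : DifferentiableAt ℝ g z₀)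
    (hfZ : ∀ z ∈ Z, f z = f z₀) (hgZ : ∀ z ∈ Z, g z = g z₀) (hfz₀ : fderiv ℝ f z₀ z₀ ≠ 0)
    {v : E} (hv : v ∈ P) :
    fderiv ℝ f z₀ z₀ * fderiv ℝ g z₀ v = fderiv ℝ g z₀ z₀ * fderiv ℝ f z₀ v := by
  obtain ⟨u, hu, hu0⟩ := tangentConeAt_nonempty_of_properSpace (𝕜 := ℝ) hacc
  have huP : u ∈ P := Submodule.tangentConeAt_subset (Submodule.closed_of_finiteDimensional P)
    hz₀ (tangentConeAt_mono hZP hu)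
  exact Submodule.mul_apply_eq_of_finrank_eq_two (α := (fderiv ℝ f z₀ : E →ₗ[ℝ] ℝ))
    (β := (fderiv ℝ g z₀ : E →ₗ[ℝ] ℝ)) hP huP hu0 hz₀
    (fderiv_apply_eq_zero_of_mem_tangentConeAt hf hfZ hu)
    (fderiv_apply_eq_zero_of_mem_tangentConeAt hg hgZ hu) hfz₀ hv

theorem lt_of_deriv_eq_zero_of_deriv2_pos {φ φ' φ'' : ℝ → ℝ} {a b : ℝ} (hab : a < b)
    (hφ : ∀ s ∈ Icc a b, HasDerivAt φ (φ' s) s) (hφ' : ∀ s ∈ Icc a b, HasDerivAt φ' (φ'' s) s)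
    (ha : φ' a = 0) (hpos : ∀ s ∈ Icc a b, 0 < φ'' s) : φ a < φ b := by
  obtain ⟨c, hc, hφc⟩ := exists_hasDerivAt_eq_slope φ φ' hab
    (fun s hs => (hφ s hs).continuousAt.continuousWithinAt)
    (fun s hs => hφ s (Ioo_subset_Icc_self hs))
  have hsub : Icc a c ⊆ Icc a b := Icc_subset_Icc_right hc.2.le
  obtain ⟨e, he, hφ'e⟩ := exists_hasDerivAt_eq_slope φ' φ'' hc.1
    (fun s hs => (hφ' s (hsub hs)).continuousAt.continuousWithinAt)
    (fun s hs => hφ' s (hsub (Ioo_subset_Icc_self hs)))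
  have hφ'c : 0 < φ' c := by
    have := hpos e (hsub (Ioo_subset_Icc_self he))
    rwa [hφ'e, ha, sub_zero, div_pos_iff_of_pos_right (sub_pos.2 hc.1)] at this
  rwa [hφc, div_pos_iff_of_pos_right (sub_pos.2 hab), sub_pos] at hφ'c

section SecondOrder

variable {E : Type*} [NormedAddCommGroup E] [NormedSpace ℝ E]

theorem add_smul_ne_zero_of_norm_lt {y v : E} (h : ‖v‖ < ‖y‖) {s : ℝ} (hs : s ∈ Icc (0 : ℝ) 1) :
    y + s • v ≠ 0 := by
  intro h0
  have hy : ‖y‖ = |s| * ‖v‖ := by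
    rw [eq_neg_of_add_eq_zero_left h0, norm_neg, norm_smul, Real.norm_eq_abs]
  have hs1 : |s| ≤ 1 := abs_le.2 ⟨by linarith [hs.1], hs.2⟩
  nlinarith [norm_nonneg v]

theorem sub_mul_lt_of_hessian_bounds {f : E → ℝ} (hf : ContDiffOn ℝ 2 f {0}ᶜ) {m M : ℝ}
    (hm : 0 ≤ m) (hQ : ∀ x ≠ 0, ∀ v, m * ‖v‖ ^ 2 ≤ fderiv ℝ (fderiv ℝ f) x v v ∧
      fderiv ℝ (fderiv ℝ f) x v v ≤ M * ‖v‖ ^ 2)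
    {y₁ y₂ v : E} (hv : v ≠ 0) (h₁ : ‖v‖ < ‖y₁‖) (h₂ : ‖v‖ < ‖y₂‖) {c : ℝ} (hcM : |c| * M < m)
    (hderiv : fderiv ℝ f y₁ v = c * fderiv ℝ f y₂ v) :
    f y₁ - c * f y₂ < f (y₁ + v) - c * f (y₂ + v) := by
  have hC2 : ∀ y ≠ 0, ContDiffAt ℝ 2 f y := fun y hy =>
    hf.contDiffAt (isOpen_compl_singleton.mem_nhds hy)
  have hD1 : ∀ y ≠ 0, DifferentiableAt ℝ f y := fun y hy =>
    (hC2 y hy).differentiableAt (by norm_num)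
  have hD2 : ∀ y ≠ 0, DifferentiableAt ℝ (fderiv ℝ f) y := fun y hy =>
    ((hC2 y hy).fderiv_right (m := 1) (by norm_num)).differentiableAt one_ne_zero
  have key := lt_of_deriv_eq_zero_of_deriv2_pos zero_lt_one
    (φ := fun s => f (y₁ + s • v) - c * f (y₂ + s • v))
    (φ' := fun s => fderiv ℝ f (y₁ + s • v) v - c * fderiv ℝ f (y₂ + s • v) v)
    (φ'' := fun s => fderiv ℝ (fderiv ℝ f) (y₁ + s • v) v v -
      c * fderiv ℝ (fderiv ℝ f) (y₂ + s • v) v v)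
    (fun s hs => (hasDerivAt_comp_add_smul (hD1 _ (add_smul_ne_zero_of_norm_lt h₁ hs))).sub
      ((hasDerivAt_comp_add_smul (hD1 _ (add_smul_ne_zero_of_norm_lt h₂ hs))).const_mul c))
    (fun s hs => (hasDerivAt_fderiv_comp_add_smul (hD2 _ (add_smul_ne_zero_of_norm_lt h₁ hs))).sub
      ((hasDerivAt_fderiv_comp_add_smul (hD2 _ (add_smul_ne_zero_of_norm_lt h₂ hs))).const_mul c))
    (by simp [hderiv]) fun s hs => by
      have hQ₁ := (hQ _ (add_smul_ne_zero_of_norm_lt h₁ hs) v).1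
      obtain ⟨hQ₂, hQ₂'⟩ := hQ _ (add_smul_ne_zero_of_norm_lt h₂ hs) v
      have hv2 : 0 < ‖v‖ ^ 2 := by positivity
      have : c * fderiv ℝ (fderiv ℝ f) (y₂ + s • v) v v ≤ |c| * M * ‖v‖ ^ 2 := by
        calc _ ≤ |c| * fderiv ℝ (fderiv ℝ f) (y₂ + s • v) v v :=
              mul_le_mul_of_nonneg_right (le_abs_self c) (by nlinarith)
          _ ≤ |c| * (M * ‖v‖ ^ 2) := mul_le_mul_of_nonneg_left hQ₂' (abs_nonneg c)
          _ = |c| * M * ‖v‖ ^ 2 := by ring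
      nlinarith
  simpa using key

end SecondOrder

section PlaneInterSpheres

variable {E : Type*} [NormedAddCommGroup E] [NormedSpace ℝ E] [FiniteDimensional ℝ E]
  (p : Seminorm ℝ E) {m M r : ℝ} {P : Submodule ℝ E}

theorem Seminorm.not_accPt_plane_inter_sphere_inter_sphere
    (hf : ContDiffOn ℝ 2 (fun z => p z ^ 2) {0}ᶜ) (hm : 0 < m) (hM : 0 ≤ M)
    (hQ : ∀ x ≠ 0, ∀ v, m * ‖v‖ ^ 2 ≤ fderiv ℝ (fderiv ℝ fun z => p z ^ 2) x v v ∧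
      fderiv ℝ (fderiv ℝ fun z => p z ^ 2) x v v ≤ M * ‖v‖ ^ 2)
    (hr : 0 < r) (hrM : r * M < m) (hP : Module.finrank ℝ P = 2) (x : E) {z₀ : E}
    (hz₀P : z₀ ∈ P) (hz₀1 : p z₀ = 1) (hz₀r : p (z₀ - x) = r) :
    ¬AccPt z₀ (𝓟 {z | z ∈ P ∧ p z = 1 ∧ p (z - x) = r}) := by
  set f : E → ℝ := fun z => p z ^ 2
  intro hacc
  have hne : ∀ y, p y ≠ 0 → y ≠ 0 := fun y hy h => hy (by simp [h])
  have hz₀ : z₀ ≠ 0 := hne _ (by simp [hz₀1])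
  have hz₀x : z₀ - x ≠ 0 := hne _ (by simp [hz₀r, hr.ne'])
  have hD : ∀ y ≠ 0, DifferentiableAt ℝ f y := fun y hy =>
    (hf.contDiffAt (isOpen_compl_singleton.mem_nhds hy)).differentiableAt (by norm_num)
  have hEuler : fderiv ℝ f z₀ z₀ = 2 := by
    rw [fderiv_apply_self_of_homogeneous (hD z₀ hz₀) (k := 2) fun t => by
      simp [f, map_smul_eq_mul, mul_pow]]
    simp [f, hz₀1]
  obtain ⟨w, ⟨hw, hwP, hw1, hwr⟩, hwz₀⟩ := accPt_iff_nhds.1 hacc _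
    (Metric.ball_mem_nhds z₀ (lt_min (norm_pos_iff.2 hz₀) (norm_pos_iff.2 hz₀x)))
  rw [Metric.mem_ball, dist_eq_norm] at hw
  -- the differentials of `f` at `z₀ - x` and `z₀` are proportional on `P`, with ratio `c`
  set c := fderiv ℝ f (z₀ - x) z₀ / 2
  have hc : |c| ≤ r := by
    have := p.abs_fderiv_sq_apply_le (hD _ hz₀x) z₀
    rw [hz₀r, hz₀1] at this
    rw [abs_div, abs_two]
    linarith
  have hprop := mul_fderiv_eq_of_accPt (g := fun z => f (z - x)) hP (fun z hz => hz.1) hz₀P hacc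
    (hD z₀ hz₀) ((differentiableAt_comp_sub x).2 (hD _ hz₀x))
    (fun z hz => by simp [f, hz.2.1, hz₀1]) (fun z hz => by simp [f, hz.2.2, hz₀r])
    (by rw [hEuler]; norm_num) (P.sub_mem hwP hz₀P)
  rw [fderiv_comp_sub, hEuler] at hprop
  have key := sub_mul_lt_of_hessian_bounds hf hm.le hQ (sub_ne_zero.2 hwz₀)
    (hw.trans_le (min_le_right _ _)) (hw.trans_le (min_le_left _ _)) (c := c)
    (by nlinarith [abs_nonneg c]) (by rw [div_mul_eq_mul_div, ← hprop]; ring)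
  simp [f, hw1, hwr, hz₀1, hz₀r] at key

theorem Seminorm.finite_plane_inter_sphere_inter_sphere (hp : ∀ x, p x = 0 → x = 0)
    (hf : ContDiffOn ℝ 2 (fun z => p z ^ 2) {0}ᶜ) (hm : 0 < m) (hM : 0 ≤ M)
    (hQ : ∀ x ≠ 0, ∀ v, m * ‖v‖ ^ 2 ≤ fderiv ℝ (fderiv ℝ fun z => p z ^ 2) x v v ∧
      fderiv ℝ (fderiv ℝ fun z => p z ^ 2) x v v ≤ M * ‖v‖ ^ 2)
    (hr : 0 < r) (hrM : r * M < m) (hP : Module.finrank ℝ P = 2) (x : E) :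
    {z | z ∈ P ∧ p z = 1 ∧ p (z - x) = r}.Finite := by
  by_contra hinf
  have hpc := p.continuous_of_finiteDimensional
  have hZ : IsCompact {z | z ∈ P ∧ p z = 1 ∧ p (z - x) = r} :=
    (p.isCompact_setOf_eq hp 1).of_isClosed_subset
      ((Submodule.closed_of_finiteDimensional P).inter ((isClosed_eq hpc continuous_const).inter
        (isClosed_eq (hpc.comp (continuous_sub_right x)) continuous_const))) fun z hz => hz.2.1
  obtain ⟨z₀, ⟨hz₀P, hz₀1, hz₀r⟩, hacc⟩ :=
    Set.Infinite.exists_accPt_of_subset_isCompact hinf hZ subset_rfl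
  exact p.not_accPt_plane_inter_sphere_inter_sphere hf hm hM hQ hr hrM hP x hz₀P hz₀1 hz₀r hacc

end PlaneInterSpheres

/-- For a `C²`-smooth strongly convex norm `N` on `ℝ^d` (the Hessian of `x ↦ N(x)²`
being positive definite at every nonzero point), there is `r₀ > 0` such that for every
`0 < r < r₀`, every `2`-dimensional linear subspace `P` and every point `x` of the unit
sphere of `N`, the set `{z ∈ P : N(z) = 1, N(z − x) = r}` is finite. -/
theorem smooth_strongly_convex_norm_sphere_circle_finite
    (d : ℕ)
    (N : (Fin d → ℝ) → ℝ)
    (hN0 : ∀ x, N x = 0 ↔ x = 0)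
    (hNsmul : ∀ (a : ℝ) (x), N (a • x) = |a| * N x)
    (hNadd : ∀ x y, N (x + y) ≤ N x + N y)
    (hNsmooth : ContDiffOn ℝ 2 N {(0 : Fin d → ℝ)}ᶜ)
    (hNstrong : ∀ x : Fin d → ℝ, x ≠ 0 → ∀ v : Fin d → ℝ, v ≠ 0 →
      0 < iteratedDeriv 2 (fun t : ℝ => (N (x + t • v)) ^ 2) 0) :
    ∃ r₀ : ℝ, 0 < r₀ ∧ ∀ r : ℝ, 0 < r → r < r₀ →
      ∀ P : Submodule ℝ (Fin d → ℝ), Module.finrank ℝ P = 2 →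
        ∀ x : Fin d → ℝ, N x = 1 →
          {z : Fin d → ℝ | z ∈ P ∧ N z = 1 ∧ N (z - x) = r}.Finite := by
  let p : Seminorm ℝ (Fin d → ℝ) := Seminorm.of N hNadd hNsmul
  have hf : ContDiffOn ℝ 2 (fun z => p z ^ 2) {0}ᶜ := hNsmooth.pow 2
  have hpos : ∀ x ≠ 0, ∀ v ≠ 0, 0 < fderiv ℝ (fderiv ℝ fun z => p z ^ 2) x v v := by
    intro x hx v hv
    rw [← iteratedDeriv_two_comp_add_smul (hf.contDiffAt (isOpen_compl_singleton.mem_nhds hx))]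
    exact hNstrong x hx v hv
  obtain ⟨m, M, hm, hM, hQ⟩ := exists_hessian_bounds hf
    (fun c z => by simp [map_smul_eq_mul, mul_pow]) hpos
  refine ⟨m / M, div_pos hm hM, fun r hr hrM P hP x _ => ?_⟩
  exact p.finite_plane_inter_sphere_inter_sphere (fun x => (hN0 x).1) hf hm hM.le hQ hr
    ((lt_div_iff₀ hM).1 hrM) hP x
end
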